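/- arXiv:2507.21381 — 8 statements merged into one kernel-verified Lean document; each statement's English description precedes it below -/
import Mathlib

section
/- Let G be a 2-digraph with alternating-cycle decomposition C. The subgraph F obtained by choosing, for each alternating cycle X in C, either all forward arcs X_f or all backward arcs X_b, is a factor of G (a spanning 1-digraph subgraph). -/
/-- In-degree of `v` in arc set `B`: number of arcs ending at `v`. -/
def inDeg {V : Type*} [DecidableEq V] (B : Finset (V × V)) (v : V) : ℕ :=
  (B.filter fun a => a.2 = v).card

/-- Out-degree of `v` in arc set `B`: number of arcs starting at `v`. -/
def outDeg {V : Type*} [DecidableEq V] (B : Finset (V × V)) (v : V) : ℕ :=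
  (B.filter fun a => a.1 = v).card

/-- A 2-digraph: every vertex has (in,out)-degrees (2,0), (0,2) or (2,2). -/
def TwoDigraph {V : Type*} [DecidableEq V] (A : Finset (V × V)) : Prop :=
  ∀ v : V, (inDeg A v = 2 ∧ outDeg A v = 0) ∨ (inDeg A v = 0 ∧ outDeg A v = 2) ∨
    (inDeg A v = 2 ∧ outDeg A v = 2)

/-- Cyclic successor on `Fin n`. -/
def cyclicSucc {n : ℕ} (i : Fin n) : Fin n :=
  ⟨(i.1 + 1) % n, Nat.mod_lt _ (Nat.lt_of_le_of_lt (Nat.zero_le _) i.isLt)⟩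

/-- An alternating cycle of the digraph with arc set `A`: a cyclic sequence of `2r`
distinct arcs, consecutive arcs sharing end-vertices at even positions and
start-vertices at odd positions. -/
structure AltCycle (V : Type*) (A : Finset (V × V)) where
  r : ℕ
  hr : 0 < r
  e : Fin (2 * r) → V × V
  inj : Function.Injective e
  memA : ∀ i, e i ∈ A
  alt : ∀ i : Fin (2 * r),
    if Even i.1 then (e i).2 = (e (cyclicSucc i)).2 else (e i).1 = (e (cyclicSucc i)).1

/-- Forward arcs of an alternating cycle (even positions). -/
def AltCycle.fwd {V : Type*} [DecidableEq V] {A : Finset (V × V)} (X : AltCycle V A) :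
    Finset (V × V) :=
  ((Finset.univ : Finset (Fin (2 * X.r))).filter fun i => Even i.1).image X.e

/-- Backward arcs of an alternating cycle (odd positions). -/
def AltCycle.bwd {V : Type*} [DecidableEq V] {A : Finset (V × V)} (X : AltCycle V A) :
    Finset (V × V) :=
  ((Finset.univ : Finset (Fin (2 * X.r))).filter fun i => ¬ Even i.1).image X.e

/-- The arc set of an alternating cycle. -/
def AltCycle.arcs {V : Type*} [DecidableEq V] {A : Finset (V × V)} (X : AltCycle V A) :
    Finset (V × V) :=
  X.fwd ∪ X.bwd

/-- A factor: a spanning subgraph that is a 1-digraph, i.e. every vertex has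
(in,out)-degrees (1,0), (0,1) or (1,1) in it. -/
def IsFactor {V : Type*} [Fintype V] [DecidableEq V] (A B : Finset (V × V)) : Prop :=
  B ⊆ A ∧ ∀ v : V, (inDeg B v = 1 ∧ outDeg B v = 0) ∨ (inDeg B v = 0 ∧ outDeg B v = 1) ∨
    (inDeg B v = 1 ∧ outDeg B v = 1)

section Aux
variable {V : Type*} [DecidableEq V] {A : Finset (V × V)}

lemma cyclicSucc_parity {r : ℕ} (i : Fin (2 * r)) :
    (cyclicSucc i).1 % 2 = (i.1 + 1) % 2 := by
  show (i.1 + 1) % (2 * r) % 2 = (i.1 + 1) % 2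
  exact Nat.mod_mod_of_dvd _ ⟨r, rfl⟩

lemma cyclicSucc_inj {n : ℕ} : Function.Injective (cyclicSucc (n := n)) := by
  intro i j h
  have hv : (i.1 + 1) % n = (j.1 + 1) % n := congrArg Fin.val h
  have hi := i.isLt; have hj := j.isLt
  apply Fin.ext
  rcases Nat.lt_or_ge (i.1 + 1) n with h1 | h1 <;>
    rcases Nat.lt_or_ge (j.1 + 1) n with h2 | h2
  · rw [Nat.mod_eq_of_lt h1, Nat.mod_eq_of_lt h2] at hv; omega
  · have : j.1 + 1 = n := by omega
    rw [Nat.mod_eq_of_lt h1, this, Nat.mod_self] at hv; omega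
  · have : i.1 + 1 = n := by omega
    rw [this, Nat.mod_self, Nat.mod_eq_of_lt h2] at hv; omega
  · omega

lemma arcs_subset (X : AltCycle V A) : X.arcs ⊆ A := by
  intro a ha
  simp only [AltCycle.arcs, AltCycle.fwd, AltCycle.bwd, Finset.mem_union,
    Finset.mem_image] at ha
  rcases ha with ⟨i, _, rfl⟩ | ⟨i, _, rfl⟩ <;> exact X.memA i

lemma fwd_bwd_disjoint (X : AltCycle V A) : Disjoint X.fwd X.bwd := by
  rw [Finset.disjoint_left]
  rintro a ha hb
  simp only [AltCycle.fwd, AltCycle.bwd, Finset.mem_image, Finset.mem_filter,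
    Finset.mem_univ, true_and] at ha hb
  obtain ⟨i, hi, rfl⟩ := ha
  obtain ⟨j, hj, hje⟩ := hb
  exact hj (X.inj hje ▸ hi)

lemma fwd_bwd_inDeg (X : AltCycle V A) (v : V) : inDeg X.fwd v = inDeg X.bwd v := by
  unfold inDeg AltCycle.fwd AltCycle.bwd
  rw [Finset.filter_image, Finset.filter_image,
      Finset.card_image_of_injective _ X.inj, Finset.card_image_of_injective _ X.inj]
  apply Finset.card_bij (fun i _ => cyclicSucc i)
  · intro i hi
    simp only [Finset.mem_filter, Finset.mem_univ, true_and] at hi ⊢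
    obtain ⟨hev, hhd⟩ := hi
    have halt := X.alt i
    rw [if_pos hev] at halt
    have hpar := cyclicSucc_parity i
    rw [Nat.even_iff] at hev ⊢
    constructor
    · omega
    · rw [← halt, hhd]
  · intro i _ j _ h
    exact cyclicSucc_inj h
  · intro j hj
    simp only [Finset.mem_filter, Finset.mem_univ, true_and] at hj
    obtain ⟨hodd, hhd⟩ := hj
    rw [Nat.even_iff] at hodd
    have hj1 : 1 ≤ j.1 := by omega
    obtain ⟨i0, hi0⟩ : ∃ i0 : Fin (2 * X.r), i0.1 = j.1 - 1 :=
      ⟨⟨j.1 - 1, by omega⟩, rfl⟩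
    have hsucc : cyclicSucc i0 = j := by
      apply Fin.ext
      show (i0.1 + 1) % (2 * X.r) = j.1
      rw [hi0, Nat.sub_add_cancel hj1, Nat.mod_eq_of_lt j.isLt]
    have hev : Even i0.1 := by rw [Nat.even_iff, hi0]; omega
    refine ⟨i0, ?_, hsucc⟩
    simp only [Finset.mem_filter, Finset.mem_univ, true_and]
    have halt := X.alt i0
    rw [if_pos hev, hsucc] at halt
    exact ⟨hev, halt.trans hhd⟩

lemma fwd_bwd_outDeg (X : AltCycle V A) (v : V) : outDeg X.fwd v = outDeg X.bwd v := by
  unfold outDeg AltCycle.fwd AltCycle.bwd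
  rw [Finset.filter_image, Finset.filter_image,
      Finset.card_image_of_injective _ X.inj, Finset.card_image_of_injective _ X.inj]
  symm
  apply Finset.card_bij (fun i _ => cyclicSucc i)
  · intro i hi
    simp only [Finset.mem_filter, Finset.mem_univ, true_and] at hi ⊢
    obtain ⟨hodd, htl⟩ := hi
    have halt := X.alt i
    rw [if_neg hodd] at halt
    have hpar := cyclicSucc_parity i
    rw [Nat.even_iff] at hodd ⊢
    have hodd' : i.1 % 2 = 1 := by omega
    constructor
    · omega
    · rw [← halt, htl]
  · intro i _ j _ h
    exact cyclicSucc_inj h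
  · intro j hj
    simp only [Finset.mem_filter, Finset.mem_univ, true_and] at hj
    obtain ⟨hev, htl⟩ := hj
    rw [Nat.even_iff] at hev
    have hn : 0 < 2 * X.r := by have := X.hr; omega
    by_cases h0 : j.1 = 0
    · obtain ⟨i0, hi0⟩ : ∃ i0 : Fin (2 * X.r), i0.1 = 2 * X.r - 1 :=
        ⟨⟨2 * X.r - 1, by omega⟩, rfl⟩
      have hsucc : cyclicSucc i0 = j := by
        apply Fin.ext
        show (i0.1 + 1) % (2 * X.r) = j.1
        rw [hi0, Nat.sub_add_cancel (by omega), Nat.mod_self, h0]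
      have hodd : ¬ Even i0.1 := by rw [Nat.even_iff, hi0]; omega
      refine ⟨i0, ?_, hsucc⟩
      simp only [Finset.mem_filter, Finset.mem_univ, true_and]
      have halt := X.alt i0
      rw [if_neg hodd, hsucc] at halt
      exact ⟨hodd, halt.trans htl⟩
    · have hj1 : 1 ≤ j.1 := by omega
      obtain ⟨i0, hi0⟩ : ∃ i0 : Fin (2 * X.r), i0.1 = j.1 - 1 :=
        ⟨⟨j.1 - 1, by omega⟩, rfl⟩
      have hsucc : cyclicSucc i0 = j := by
        apply Fin.ext
        show (i0.1 + 1) % (2 * X.r) = j.1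
        rw [hi0, Nat.sub_add_cancel hj1, Nat.mod_eq_of_lt j.isLt]
      have hodd : ¬ Even i0.1 := by rw [Nat.even_iff, hi0]; omega
      refine ⟨i0, ?_, hsucc⟩
      simp only [Finset.mem_filter, Finset.mem_univ, true_and]
      have halt := X.alt i0
      rw [if_neg hodd, hsucc] at halt
      exact ⟨hodd, halt.trans htl⟩

end Aux

theorem choice_is_factor {V : Type*} [Fintype V] [DecidableEq V]
    (A : Finset (V × V)) (h2 : TwoDigraph A)
    {ι : Type*} [Fintype ι] (X : ι → AltCycle V A)
    (hdec : ∀ a ∈ A, ∃! i : ι, a ∈ (X i).arcs)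
    (σ : ι → Bool) :
    IsFactor A (Finset.univ.biUnion fun i => if σ i then (X i).fwd else (X i).bwd) := by
  classical
  set c : ι → Finset (V × V) := fun i => if σ i then (X i).fwd else (X i).bwd with hc
  have hcsub : ∀ i, c i ⊆ (X i).arcs := by
    intro i
    rw [AltCycle.arcs]
    by_cases h : σ i
    · simp only [hc, if_pos h]; exact Finset.subset_union_left
    · simp only [hc, if_neg h]; exact Finset.subset_union_right
  have hFsub : (Finset.univ.biUnion c) ⊆ A := by
    intro a ha
    obtain ⟨i, _, hai⟩ := Finset.mem_biUnion.mp ha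
    exact arcs_subset (X i) (hcsub i hai)
  have hdisj : ∀ i j : ι, i ≠ j → Disjoint ((X i).arcs) ((X j).arcs) := by
    intro i j hij
    rw [Finset.disjoint_left]
    intro a hai haj
    obtain ⟨k, _, huniq⟩ := hdec a (arcs_subset (X i) hai)
    exact hij ((huniq i hai).trans (huniq j haj).symm)
  have hA : A = Finset.univ.biUnion fun i => (X i).arcs := by
    ext a
    constructor
    · intro ha
      obtain ⟨i, hi, _⟩ := hdec a ha
      exact Finset.mem_biUnion.mpr ⟨i, Finset.mem_univ i, hi⟩
    · intro ha
      obtain ⟨i, _, hai⟩ := Finset.mem_biUnion.mp ha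
      exact arcs_subset (X i) hai
  -- generic counting
  have key : ∀ (p : V × V → Prop) [DecidablePred p],
      (∀ i, ((X i).fwd.filter p).card = ((X i).bwd.filter p).card) →
      (A.filter p).card = 2 * ((Finset.univ.biUnion c).filter p).card := by
    intro p _ hpair
    rw [hA, Finset.filter_biUnion, Finset.filter_biUnion]
    rw [Finset.card_biUnion (fun i _ j _ hij =>
      Finset.disjoint_filter_filter (hdisj i j hij))]
    rw [Finset.card_biUnion (fun i _ j _ hij =>
      Finset.disjoint_filter_filter ((hdisj i j hij).mono (hcsub i) (hcsub j)))]
    rw [Finset.mul_sum]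
    apply Finset.sum_congr rfl
    intro i _
    have harcs : ((X i).arcs.filter p).card
        = ((X i).fwd.filter p).card + ((X i).bwd.filter p).card := by
      rw [AltCycle.arcs, Finset.filter_union,
        Finset.card_union_of_disjoint
          (Finset.disjoint_filter_filter (fwd_bwd_disjoint (X i)))]
    by_cases h : σ i
    · simp only [hc, if_pos h]
      rw [harcs, hpair i]; ring
    · simp only [hc, if_neg h]
      rw [harcs, hpair i]; ring
  have hin : ∀ v, inDeg A v = 2 * inDeg (Finset.univ.biUnion c) v := fun v =>
    key (fun a => a.2 = v) (fun i => fwd_bwd_inDeg (X i) v)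
  have hout : ∀ v, outDeg A v = 2 * outDeg (Finset.univ.biUnion c) v := fun v =>
    key (fun a => a.1 = v) (fun i => fwd_bwd_outDeg (X i) v)
  refine ⟨hFsub, fun v => ?_⟩
  have h1 := hin v
  have h2' := hout v
  rcases h2 v with ⟨ha, hb⟩ | ⟨ha, hb⟩ | ⟨ha, hb⟩
  · left; omega
  · right; left; omega
  · right; right; omega
end

section
/- In a 2-digraph, if an alternating cycle X with 2r arcs has no entry and no exit vertices among its incident vertices (all vertices of X are saturated in X), then X has exactly r vertices and X is a connected component of G that is itself a 2-diregular digraph. -/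
theorem saturated_altCycle_is_component {V : Type*} [Fintype V] [DecidableEq V]
    (A : Finset (V × V)) (h2 : TwoDigraph A) (X : AltCycle V A)
    (hsat : ∀ v ∈ (X.arcs.image Prod.fst) ∪ (X.arcs.image Prod.snd),
      inDeg X.arcs v = 2 ∧ outDeg X.arcs v = 2) :
    ((X.arcs.image Prod.fst) ∪ (X.arcs.image Prod.snd)).card = X.r ∧
    ∀ a ∈ A, (a.1 ∈ (X.arcs.image Prod.fst) ∪ (X.arcs.image Prod.snd) ∨
        a.2 ∈ (X.arcs.image Prod.fst) ∪ (X.arcs.image Prod.snd)) → a ∈ X.arcs := by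
  have harcs : X.arcs = (Finset.univ : Finset (Fin (2 * X.r))).image X.e := by
    rw [AltCycle.arcs, AltCycle.fwd, AltCycle.bwd, ← Finset.image_union,
      Finset.filter_union_filter_not_eq]
  have hcard : X.arcs.card = 2 * X.r := by
    rw [harcs, Finset.card_image_of_injective _ X.inj, Finset.card_univ, Fintype.card_fin]
  have hsub : X.arcs ⊆ A := by
    intro a ha
    rw [harcs] at ha
    obtain ⟨i, _, rfl⟩ := Finset.mem_image.mp ha
    exact X.memA i
  set S := (X.arcs.image Prod.fst) ∪ (X.arcs.image Prod.snd) with hS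
  have hScard : S.card = X.r := by
    have hfst : ∀ a ∈ X.arcs, a.1 ∈ S := fun a ha =>
      Finset.mem_union_left _ (Finset.mem_image_of_mem _ ha)
    have hsum := Finset.card_eq_sum_card_fiberwise hfst
    have hsum2 : ∑ v ∈ S, (X.arcs.filter fun a => a.1 = v).card = ∑ v ∈ S, 2 := by
      refine Finset.sum_congr rfl fun v hv => ?_
      exact (hsat v hv).2
    rw [hsum2, Finset.sum_const, smul_eq_mul, hcard] at hsum
    omega
  refine ⟨hScard, fun a ha hmem => ?_⟩
  rcases hmem with hm | hm
  · have hout : outDeg X.arcs a.1 = 2 := (hsat a.1 hm).2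
    have hle : (X.arcs.filter fun b => b.1 = a.1) ⊆ (A.filter fun b => b.1 = a.1) :=
      Finset.filter_subset_filter _ hsub
    have houtA : outDeg A a.1 = 2 := by
      have h2' := h2 a.1
      have hge : 2 ≤ outDeg A a.1 := by
        rw [← hout]; exact Finset.card_le_card hle
      rcases h2' with ⟨_, h⟩ | ⟨_, h⟩ | ⟨_, h⟩ <;> omega
    have heq : (X.arcs.filter fun b => b.1 = a.1) = (A.filter fun b => b.1 = a.1) := by
      apply Finset.eq_of_subset_of_card_le hle
      rw [show (A.filter fun b => b.1 = a.1).card = outDeg A a.1 from rfl, houtA,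
        show (X.arcs.filter fun b => b.1 = a.1).card = outDeg X.arcs a.1 from rfl, hout]
    have : a ∈ A.filter fun b => b.1 = a.1 := Finset.mem_filter.mpr ⟨ha, rfl⟩
    rw [← heq] at this
    exact (Finset.mem_filter.mp this).1
  · have hin : inDeg X.arcs a.2 = 2 := (hsat a.2 hm).1
    have hle : (X.arcs.filter fun b => b.2 = a.2) ⊆ (A.filter fun b => b.2 = a.2) :=
      Finset.filter_subset_filter _ hsub
    have hinA : inDeg A a.2 = 2 := by
      have h2' := h2 a.2
      have hge : 2 ≤ inDeg A a.2 := by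
        rw [← hin]; exact Finset.card_le_card hle
      rcases h2' with ⟨h, _⟩ | ⟨h, _⟩ | ⟨h, _⟩ <;> omega
    have heq : (X.arcs.filter fun b => b.2 = a.2) = (A.filter fun b => b.2 = a.2) := by
      apply Finset.eq_of_subset_of_card_le hle
      rw [show (A.filter fun b => b.2 = a.2).card = inDeg A a.2 from rfl, hinA,
        show (X.arcs.filter fun b => b.2 = a.2).card = inDeg X.arcs a.2 from rfl, hin]
    have : a ∈ A.filter fun b => b.2 = a.2 := Finset.mem_filter.mpr ⟨ha, rfl⟩
    rw [← heq] at this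
    exact (Finset.mem_filter.mp this).1
end

section
/- Let G be a connected 2-digraph and S a split-set with split-components H^1,…,H^n. Then |V_sat(G)| = Σ_j |V_sat(H^j)| + |S|, |V_entry(G)| = Σ_j |V_entry(H^j)| − |S|, and |V_exit(G)| = Σ_j |V_exit(H^j)| − |S|. -/
/-- Vertices of the graph obtained from `(V, A)` by splitting the vertices of `S`:
`(v, false)` is `v` itself (or `v^out` when `v ∈ S`), and `(v, true)` is `v^in`
for `v ∈ S`. -/
def splitVerts {V : Type*} [Fintype V] [DecidableEq V] (S : Finset V) :
    Finset (V × Bool) :=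
  (Finset.univ.image fun v => (v, false)) ∪ (S.image fun v => (v, true))

/-- Arcs of the graph obtained from `(V, A)` by splitting the vertices of `S`:
an arc `(u, w)` ends at `w^in = (w, true)` if `w ∈ S`, else at `(w, false)`;
it starts at `(u, false)` (which is `u^out` when `u ∈ S`). -/
def splitArcs {V : Type*} [Fintype V] [DecidableEq V] (A : Finset (V × V)) (S : Finset V) :
    Finset ((V × Bool) × (V × Bool)) :=
  A.image fun a => ((a.1, false), (a.2, if a.2 ∈ S then true else false))

/-- Reachability in the underlying undirected graph of the split graph. -/
def splitReach {V : Type*} [Fintype V] [DecidableEq V] (A : Finset (V × V)) (S : Finset V) :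
    V × Bool → V × Bool → Prop :=
  Relation.ReflTransGen (fun x y => (x, y) ∈ splitArcs A S ∨ (y, x) ∈ splitArcs A S)

/-- The graph obtained by splitting `S` is connected (as an undirected graph). -/
def SplitConnected {V : Type*} [Fintype V] [DecidableEq V] (A : Finset (V × V))
    (S : Finset V) : Prop :=
  ∀ x ∈ splitVerts (V := V) S, ∀ y ∈ splitVerts (V := V) S, splitReach A S x y

/-!
Splitting a saturated vertex `v` leaves the degrees of all other vertices unchanged and turns `v`,
of degrees (2,2), into `v^out = (v, false)` of degrees (0,2) and `v^in = (v, true)` of degrees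
(2,0). So splitting `S` trades `|S|` saturated vertices for `|S|` new entry and `|S|` new exit
vertices.
-/

lemma splitArc_injective {V : Type*} [DecidableEq V] (S : Finset V) :
    Function.Injective fun a : V × V => ((a.1, false), (a.2, if a.2 ∈ S then true else false)) :=
  fun _ _ h => Prod.ext (congrArg (·.1.1) h) (congrArg (·.2.1) h)

lemma filter_degrees_of_saturated {V : Type*} [DecidableEq V] {A : Finset (V × V)} {S : Finset V}
    (hS : ∀ v ∈ S, inDeg A v = 2 ∧ outDeg A v = 2)
    (P : ℕ → ℕ → Prop) [∀ i o, Decidable (P i o)] :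
    (S.filter fun v => P (inDeg A v) (outDeg A v)) = if P 2 2 then S else ∅ := by
  rw [← Finset.filter_const]
  exact Finset.filter_congr fun v hv => by rw [(hS v hv).1, (hS v hv).2]

section SplitDegrees

variable {V : Type*} [Fintype V] [DecidableEq V] (A : Finset (V × V)) (S : Finset V)

lemma outDeg_splitArcs (v : V) (b : Bool) :
    outDeg (splitArcs A S) (v, b) = if b then 0 else outDeg A v := by
  unfold outDeg splitArcs
  rw [Finset.filter_image, Finset.card_image_of_injective _ (splitArc_injective S)]
  cases b <;> simp [Prod.ext_iff]

lemma inDeg_splitArcs (v : V) (b : Bool) :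
    inDeg (splitArcs A S) (v, b) = if b = decide (v ∈ S) then inDeg A v else 0 := by
  unfold inDeg splitArcs
  rw [Finset.filter_image, Finset.card_image_of_injective _ (splitArc_injective S)]
  split_ifs with hb
  · congr 1
    exact Finset.filter_congr fun a _ => by grind
  · rw [Finset.card_eq_zero, Finset.filter_eq_empty_iff]
    grind

lemma card_filter_splitVerts (P : ℕ → ℕ → Prop) [∀ i o, Decidable (P i o)] :
    ((splitVerts S).filter fun x => P (inDeg (splitArcs A S) x) (outDeg (splitArcs A S) x)).card =
      (Sᶜ.filter fun v => P (inDeg A v) (outDeg A v)).card +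
        (S.filter fun v => P 0 (outDeg A v)).card + (S.filter fun v => P (inDeg A v) 0).card := by
  have hdisj : Disjoint (Finset.univ.image fun v : V => (v, false)) (S.image fun v => (v, true)) := by
    simp [Finset.disjoint_left]
  rw [splitVerts, Finset.filter_union, Finset.card_union_of_disjoint
      (Finset.disjoint_filter_filter hdisj), Finset.filter_image, Finset.filter_image,
    Finset.card_image_of_injective _ (Prod.mk_left_injective false),
    Finset.card_image_of_injective _ (Prod.mk_left_injective true)]
  simp only [Finset.card_filter, inDeg_splitArcs, outDeg_splitArcs]
  rw [← Finset.sum_compl_add_sum S]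
  congr 1
  congr 1
  all_goals exact Finset.sum_congr rfl fun v hv => by simp_all

lemma card_filter_splitVerts_add_of_saturated (hS : ∀ v ∈ S, inDeg A v = 2 ∧ outDeg A v = 2)
    (P : ℕ → ℕ → Prop) [∀ i o, Decidable (P i o)] :
    ((splitVerts S).filter fun x => P (inDeg (splitArcs A S) x) (outDeg (splitArcs A S) x)).card +
        (if P 2 2 then S.card else 0) =
      (Finset.univ.filter fun v => P (inDeg A v) (outDeg A v)).card +
        (if P 0 2 then S.card else 0) + (if P 2 0 then S.card else 0) := by
  have card_filter_univ (R : V → Prop) [DecidablePred R] :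
      (Finset.univ.filter R).card = (Sᶜ.filter R).card + (S.filter R).card := by
    simp only [Finset.card_filter]
    exact (Finset.sum_compl_add_sum S _).symm
  rw [card_filter_splitVerts, card_filter_univ, filter_degrees_of_saturated hS,
    filter_degrees_of_saturated hS (fun _ o => P 0 o),
    filter_degrees_of_saturated hS (fun i _ => P i 0)]
  simp only [apply_ite Finset.card, Finset.card_empty]
  ring

end SplitDegrees

theorem split_set_degree_counts_general {V : Type*} [Fintype V] [DecidableEq V]
    (A : Finset (V × V))
    (S : Finset V) (hS : ∀ v ∈ S, inDeg A v = 2 ∧ outDeg A v = 2) :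
    (Finset.univ.filter fun v : V => inDeg A v = 2 ∧ outDeg A v = 2).card =
      ((splitVerts (V := V) S).filter fun x =>
        inDeg (splitArcs A S) x = 2 ∧ outDeg (splitArcs A S) x = 2).card + S.card ∧
    (Finset.univ.filter fun v : V => inDeg A v = 0 ∧ outDeg A v = 2).card =
      ((splitVerts (V := V) S).filter fun x =>
        inDeg (splitArcs A S) x = 0 ∧ outDeg (splitArcs A S) x = 2).card - S.card ∧
    (Finset.univ.filter fun v : V => inDeg A v = 2 ∧ outDeg A v = 0).card =
      ((splitVerts (V := V) S).filter fun x =>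
        inDeg (splitArcs A S) x = 2 ∧ outDeg (splitArcs A S) x = 0).card - S.card := by
  have saturated := card_filter_splitVerts_add_of_saturated A S hS fun i o => i = 2 ∧ o = 2
  have entry := card_filter_splitVerts_add_of_saturated A S hS fun i o => i = 0 ∧ o = 2
  have exit := card_filter_splitVerts_add_of_saturated A S hS fun i o => i = 2 ∧ o = 0
  norm_num at saturated entry exit
  omega

theorem split_set_degree_counts {V : Type*} [Fintype V] [DecidableEq V]
    (A : Finset (V × V)) (h2 : TwoDigraph A)
    (hconn : SplitConnected A (∅ : Finset V))
    (S : Finset V) (hS : ∀ v ∈ S, inDeg A v = 2 ∧ outDeg A v = 2)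
    (hsplit : ¬ SplitConnected A S) :
    (Finset.univ.filter fun v : V => inDeg A v = 2 ∧ outDeg A v = 2).card =
      ((splitVerts (V := V) S).filter fun x =>
        inDeg (splitArcs A S) x = 2 ∧ outDeg (splitArcs A S) x = 2).card + S.card ∧
    (Finset.univ.filter fun v : V => inDeg A v = 0 ∧ outDeg A v = 2).card =
      ((splitVerts (V := V) S).filter fun x =>
        inDeg (splitArcs A S) x = 0 ∧ outDeg (splitArcs A S) x = 2).card - S.card ∧
    (Finset.univ.filter fun v : V => inDeg A v = 2 ∧ outDeg A v = 0).card =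
      ((splitVerts (V := V) S).filter fun x =>
        inDeg (splitArcs A S) x = 2 ∧ outDeg (splitArcs A S) x = 0).card - S.card :=
  split_set_degree_counts_general A S hS
end

section
/- Let G be a connected 2-diregular digraph and S a minimal split-set. Then for every v ∈ S, the two vertices v^in and v^out obtained by splitting v lie in different split-components. -/
theorem minimal_split_in_out_separated {V : Type*} [Fintype V] [DecidableEq V]
    (A : Finset (V × V))
    (hreg : ∀ v : V, inDeg A v = 2 ∧ outDeg A v = 2)
    (hconn : SplitConnected A (∅ : Finset V))
    (S : Finset V) (hsplit : ¬ SplitConnected A S)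
    (hmin : ∀ T ⊂ S, SplitConnected A T) :
    ∀ v ∈ S, ¬ splitReach A S (v, true) (v, false) := by
  intro v hv hreach
  apply hsplit
  set T := S.erase v with hT
  have hTS : T ⊂ S := Finset.erase_ssubset hv
  have hconnT := hmin T hTS
  have symm : ∀ {x y : V × Bool}, splitReach A S x y → splitReach A S y x := by
    intro x y h
    induction h with
    | refl => exact Relation.ReflTransGen.refl
    | tail _ hstep ih =>
      exact Relation.ReflTransGen.trans (Relation.ReflTransGen.single hstep.symm) ih
  have edge : ∀ {b c : V × Bool}, (b, c) ∈ splitArcs A T → splitReach A S b c := by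
    intro b c hm
    simp only [splitArcs, Finset.mem_image] at hm
    obtain ⟨a, ha, heq⟩ := hm
    have hb : b = (a.1, false) := by
      have := congrArg Prod.fst heq; simpa using this.symm
    have hc : c = (a.2, if a.2 ∈ T then true else false) := by
      have := congrArg Prod.snd heq; simpa using this.symm
    have hS : ((a.1, false), (a.2, if a.2 ∈ S then true else false)) ∈ splitArcs A S := by
      simp only [splitArcs, Finset.mem_image]
      exact ⟨a, ha, rfl⟩
    subst hb hc
    by_cases h2 : a.2 ∈ T
    · have h2S : a.2 ∈ S := Finset.mem_of_mem_erase h2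
      simp only [h2, h2S, if_true]
      exact Relation.ReflTransGen.single (Or.inl (by simpa [h2S] using hS))
    · simp only [h2, if_neg, if_false]
      by_cases h2S : a.2 ∈ S
      · have hva : a.2 = v := by
          rcases Finset.mem_erase.not.mp h2 with h
          push_neg at h
          by_contra hne
          exact hne (by simpa [hT, Finset.mem_erase, h2S] using h2)
        have step1 : splitReach A S (a.1, false) (a.2, true) :=
          Relation.ReflTransGen.single (Or.inl (by simpa [h2S] using hS))
        subst hva
        exact step1.trans hreach
      · exact Relation.ReflTransGen.single (Or.inl (by simpa [h2S] using hS))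
  have key : ∀ {x y : V × Bool}, splitReach A T x y → splitReach A S x y := by
    intro x y h
    induction h with
    | refl => exact Relation.ReflTransGen.refl
    | tail _ hstep ih =>
      rcases hstep with h1 | h1
      · exact ih.trans (edge h1)
      · exact ih.trans (symm (edge h1))
  have repr : ∀ x ∈ splitVerts (V := V) S,
      ∃ x', x' ∈ splitVerts (V := V) T ∧ splitReach A S x x' := by
    intro x hx
    simp only [splitVerts, Finset.mem_union, Finset.mem_image, Finset.mem_univ,
      true_and] at hx
    rcases hx with ⟨w, hw⟩ | ⟨w, hwS, hw⟩
    · refine ⟨x, ?_, Relation.ReflTransGen.refl⟩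
      simp only [splitVerts, Finset.mem_union, Finset.mem_image, Finset.mem_univ, true_and]
      exact Or.inl ⟨w, hw⟩
    · by_cases hwv : w = v
      · refine ⟨(v, false), ?_, ?_⟩
        · simp only [splitVerts, Finset.mem_union, Finset.mem_image, Finset.mem_univ, true_and]
          exact Or.inl ⟨v, rfl⟩
        · subst hw hwv; exact hreach
      · refine ⟨x, ?_, Relation.ReflTransGen.refl⟩
        simp only [splitVerts, Finset.mem_union, Finset.mem_image]
        exact Or.inr ⟨w, Finset.mem_erase.mpr ⟨hwv, hwS⟩, hw⟩
  intro x hx y hy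
  obtain ⟨x', hx', hxx⟩ := repr x hx
  obtain ⟨y', hy', hyy⟩ := repr y hy
  exact hxx.trans ((key (hconnT x' hx' y' hy')).trans (symm hyy))
end

section
/- Let G be a connected 2-diregular digraph and S a minimal split-set. Then |S| is even. -/
/-!
Fix `v ∈ S`. By minimality, splitting `S \ {w}` leaves the graph connected, and a path there
becomes a path after splitting `S` except where it passes through `w`. Hence `w^in` and `w^out`
are not joined after splitting `S` (otherwise `S` would not disconnect), and every vertex is
joined to `v^in` or to `v^out`. So for each `w ∈ S` exactly one of `w^in`, `w^out` lies in the
component `C` of `v^out`. Every arc of the split graph stays inside or outside `C`, and all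
in- and out-degrees are `2`, so counting the arcs of `C` by heads and by tails shows that `C`
contains as many copies `w^in` as copies `w^out`: these two halves partition `S`.
-/

open Finset

section SplitGraph

variable {V : Type*} [Fintype V] [DecidableEq V] {A : Finset (V × V)} {S : Finset V}

lemma mem_splitVerts {x : V × Bool} : x ∈ splitVerts S ↔ x.2 = false ∨ x.1 ∈ S := by
  obtain ⟨u, _ | _⟩ := x <;> simp [splitVerts]

lemma mem_splitVerts_erase {w : V} {x : V × Bool} (hx : x ∈ splitVerts S) :
    x ∈ splitVerts (S.erase w) ∨ x = (w, true) := by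
  obtain ⟨u, _ | _⟩ := x <;> simp_all [mem_splitVerts]
  tauto

lemma splitReach.symm {x y : V × Bool} (h : splitReach A S x y) : splitReach A S y x :=
  Relation.ReflTransGen.mono (fun _ _ => Or.symm) _ _ (Relation.ReflTransGen.swap _ _ h)

lemma splitReach_of_mem {a : V × V} (ha : a ∈ A) :
    splitReach A S (a.1, false) (a.2, if a.2 ∈ S then true else false) :=
  .single (.inl (mem_image_of_mem _ ha))

lemma splitArcs_erase {w : V} {x y : V × Bool} (h : (x, y) ∈ splitArcs A (S.erase w)) :
    (x, y) ∈ splitArcs A S ∨ y = (w, false) ∧ (x, (w, true)) ∈ splitArcs A S := by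
  simp only [splitArcs, mem_image, Prod.mk.injEq] at h ⊢
  obtain ⟨a, ha, rfl, rfl⟩ := h
  by_cases haw : a.2 = w
  · subst haw
    by_cases hS : a.2 ∈ S
    · exact .inr ⟨by simp, a, ha, rfl, by simp [hS]⟩
    · exact .inl ⟨a, ha, rfl, by simp [hS]⟩
  · exact .inl ⟨a, ha, rfl, by simp [haw]⟩

lemma splitReach_copies_of_splitReach_erase {w : V} {x : V × Bool}
    (h : splitReach A (S.erase w) x (w, false)) :
    splitReach A S x (w, false) ∨ splitReach A S x (w, true) := by
  induction h using Relation.ReflTransGen.head_induction_on with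
  | refl => exact .inl .refl
  | head hxy _ ih =>
    rcases hxy with hxy | hxy
    · rcases splitArcs_erase hxy with hxy | ⟨rfl, hxw⟩
      · exact ih.imp (.head (.inl hxy)) (.head (.inl hxy))
      · exact .inr (.single (.inl hxw))
    · rcases splitArcs_erase hxy with hxy | ⟨rfl, _⟩
      · exact ih.imp (.head (.inr hxy)) (.head (.inr hxy))
      · exact .inl .refl

lemma splitReach_copies_of_splitConnected_erase {w : V} (hT : SplitConnected A (S.erase w))
    {x : V × Bool} (hx : x ∈ splitVerts S) :
    splitReach A S x (w, false) ∨ splitReach A S x (w, true) := by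
  rcases mem_splitVerts_erase (w := w) hx with hx | rfl
  · exact splitReach_copies_of_splitReach_erase (hT x hx _ (mem_splitVerts.2 (.inl rfl)))
  · exact .inr .refl

lemma not_splitReach_copies {w : V} (hS : ¬ SplitConnected A S)
    (hT : SplitConnected A (S.erase w)) : ¬ splitReach A S (w, false) (w, true) := by
  intro hw
  have hreach : ∀ x ∈ splitVerts S, splitReach A S x (w, false) := fun x hx =>
    (splitReach_copies_of_splitConnected_erase hT hx).elim id (·.trans hw.symm)
  exact hS fun x hx y hy => (hreach x hx).trans (hreach y hy).symm

lemma splitReach_in_iff_not_splitReach_out (hS : ¬ SplitConnected A S)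
    (hmin : ∀ T ⊂ S, SplitConnected A T) {v w : V} (hv : v ∈ S) (hw : w ∈ S) :
    splitReach A S (w, true) (v, false) ↔ ¬ splitReach A S (w, false) (v, false) := by
  have hsep := not_splitReach_copies hS (hmin _ (erase_ssubset hw))
  have hcopies x (hx : x ∈ splitVerts S) :=
    splitReach_copies_of_splitConnected_erase (hmin _ (erase_ssubset hv)) hx
  refine ⟨fun hin hout => hsep (hout.trans hin.symm), fun hout => ?_⟩
  by_contra hin
  have hout' := (hcopies (w, false) (mem_splitVerts.2 (.inl rfl))).resolve_left hout
  have hin' := (hcopies (w, true) (mem_splitVerts.2 (.inr hw))).resolve_left hin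
  exact hsep (hout'.trans hin'.symm)

lemma card_filter_comp_eq_sum_card_fiber {α : Type*} (s : Finset α) (f : α → V)
    (Q : V → Prop) [DecidablePred Q] :
    #{a ∈ s | Q (f a)} = ∑ u with Q u, #{a ∈ s | f a = u} := by
  rw [card_eq_sum_card_fiberwise (f := f) (t := {u | Q u}) (fun a ha => by simp_all)]
  refine sum_congr rfl fun u hu => ?_
  rw [filter_filter]
  exact congrArg card (filter_congr fun a _ => by grind)

lemma card_filter_univ_eq_add_compl (Q : V → Prop) [DecidablePred Q] :
    #{u | Q u} = #{u ∈ S | Q u} + #{u ∈ Sᶜ | Q u} := by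
  simp only [card_filter]
  exact (sum_add_sum_compl S _).symm

lemma card_filter_in_eq_card_filter_out {d : ℕ} (hd : 0 < d)
    (hreg : ∀ v, inDeg A v = d ∧ outDeg A v = d) (P : V × Bool → Prop) [DecidablePred P]
    (hP : ∀ a ∈ A, P (a.1, false) ↔ P (a.2, if a.2 ∈ S then true else false)) :
    #{w ∈ S | P (w, true)} = #{w ∈ S | P (w, false)} := by
  have hin : #{a ∈ A | P (a.2, if a.2 ∈ S then true else false)} =
      #{u | P (u, if u ∈ S then true else false)} * d := by
    rw [card_filter_comp_eq_sum_card_fiber A Prod.snd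
      (fun u => P (u, if u ∈ S then true else false))]
    exact sum_const_nat fun u _ => (hreg u).1
  have hout : #{a ∈ A | P (a.1, false)} = #{u | P (u, false)} * d := by
    rw [card_filter_comp_eq_sum_card_fiber A Prod.fst (fun u => P (u, false))]
    exact sum_const_nat fun u _ => (hreg u).2
  have hverts : #{u | P (u, if u ∈ S then true else false)} = #{u | P (u, false)} :=
    Nat.eq_of_mul_eq_mul_right hd (by rw [← hin, ← hout, filter_congr hP])
  rw [card_filter_univ_eq_add_compl (S := S),
    card_filter_univ_eq_add_compl (S := S) (fun u => P (u, false))] at hverts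
  have hS : {u ∈ S | P (u, if u ∈ S then true else false)} = {w ∈ S | P (w, true)} :=
    filter_congr fun u hu => by simp [hu]
  have hSc : {u ∈ Sᶜ | P (u, if u ∈ S then true else false)} = {u ∈ Sᶜ | P (u, false)} :=
    filter_congr fun u hu => by simp [mem_compl.1 hu]
  rw [hS, hSc] at hverts
  omega

end SplitGraph

theorem minimal_split_set_even {V : Type*} [Fintype V] [DecidableEq V]
    (A : Finset (V × V))
    (hreg : ∀ v : V, inDeg A v = 2 ∧ outDeg A v = 2)
    (hconn : SplitConnected A (∅ : Finset V))
    (S : Finset V) (hsplit : ¬ SplitConnected A S)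
    (hmin : ∀ T ⊂ S, SplitConnected A T) :
    Even S.card := by
  classical
  obtain ⟨v, hv⟩ : S.Nonempty := nonempty_iff_ne_empty.2 fun h => hsplit (h ▸ hconn)
  set P : V × Bool → Prop := fun x => splitReach A S x (v, false)
  have hP : ∀ a ∈ A, P (a.1, false) ↔ P (a.2, if a.2 ∈ S then true else false) :=
    fun a ha => ⟨(splitReach_of_mem ha).symm.trans, (splitReach_of_mem ha).trans⟩
  have hin_out := card_filter_in_eq_card_filter_out two_pos hreg P hP
  have hout : {w ∈ S | ¬ P (w, true)} = {w ∈ S | P (w, false)} := filter_congr fun w hw =>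
    (splitReach_in_iff_not_splitReach_out hsplit hmin hv hw).not.trans not_not
  refine ⟨#{w ∈ S | P (w, false)}, ?_⟩
  rw [← card_filter_add_card_filter_not (s := S) (fun w => P (w, true)), hout, hin_out]
end

section
/- Let G be an odd 2-diregular digraph (every factor of G has an odd number of cycles) admitting a minimal split-set S = {u,v} of size two, with split-components containing {u^in, v^out} and {u^out, v^in} respectively; let G'_1, G'_2 be the 2-dds obtained by splicing these pairs within each component. Then G has a Hamiltonian circuit if and only if both G'_1 and G'_2 have Hamiltonian circuits. -/
/-- A factor of the digraph with arc set `A` restricted to vertex set `U`, viewed as a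
permutation: it moves along arcs of `A` on `U` and fixes everything outside `U`. -/
def IsFactorPerm {V : Type*} [Fintype V] [DecidableEq V] (A : Finset (V × V))
    (U : Finset V) (σ : Equiv.Perm V) : Prop :=
  (∀ x ∈ U, (x, σ x) ∈ A) ∧ ∀ x ∉ U, σ x = x

/-- The number of cycles of such a factor: nontrivial cycles plus loops (fixed points
inside `U`). -/
def cycleCountOn {V : Type*} [Fintype V] [DecidableEq V] (U : Finset V)
    (σ : Equiv.Perm V) : ℕ :=
  σ.cycleType.card + (U.filter fun x => σ x = x).card

/-- Every factor has an odd number of cycles. -/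
def AllFactorsOdd {V : Type*} [Fintype V] [DecidableEq V] (A : Finset (V × V))
    (U : Finset V) : Prop :=
  ∀ σ : Equiv.Perm V, IsFactorPerm A U σ → Odd (cycleCountOn U σ)

/-- Every factor has an even number of cycles. -/
def AllFactorsEven {V : Type*} [Fintype V] [DecidableEq V] (A : Finset (V × V))
    (U : Finset V) : Prop :=
  ∀ σ : Equiv.Perm V, IsFactorPerm A U σ → Even (cycleCountOn U σ)

/-- A Hamiltonian circuit on vertex set `U` using arcs from `B`. -/
def IsHamCycle {V : Type*} [DecidableEq V] (U : Finset V) (B : Finset (V × V)) : Prop :=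
  ∃ (n : ℕ) (f : Fin n → V), 0 < n ∧ Function.Injective f ∧
    (∀ x : V, x ∈ U ↔ ∃ i, f i = x) ∧ ∀ i : Fin n, (f i, f (cyclicSucc i)) ∈ B

/-- `spliceMap a b` identifies vertex `a` with vertex `b`. -/
def spliceMap {V : Type*} [DecidableEq V] (a b : V) : V → V :=
  fun x => if x = a then b else x

/-! ### Auxiliary machinery -/

/-- ℕ-indexed version of a Hamiltonian circuit. -/
def NatHam {V : Type*} [DecidableEq V] (U : Finset V) (B : Finset (V × V)) : Prop :=
  ∃ (N : ℕ) (F : ℕ → V), 0 < N ∧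
    (∀ i < N, ∀ j < N, F i = F j → i = j) ∧
    (∀ x : V, x ∈ U ↔ ∃ i < N, F i = x) ∧
    (∀ j, F (j + N) = F j) ∧
    ∀ j, (F j, F (j + 1)) ∈ B

lemma periodic_mod {V : Type*} (F : ℕ → V) (N : ℕ) (hN : 0 < N)
    (hp : ∀ j, F (j + N) = F j) : ∀ a, F a = F (a % N) := by
  intro a
  induction a using Nat.strong_induction_on with
  | _ a ih =>
    rcases lt_or_ge a N with h | h
    · rw [Nat.mod_eq_of_lt h]
    · have h1 : a - N + N = a := Nat.sub_add_cancel h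
      have h2 : F a = F (a - N) := by conv_lhs => rw [← h1, hp]
      rw [h2, ih (a - N) (by omega)]
      congr 1
      conv_rhs => rw [show a = (a - N) + N from (Nat.sub_add_cancel h).symm]
      rw [Nat.add_mod_right]

lemma ham_iff_natham {V : Type*} [DecidableEq V] (U : Finset V) (B : Finset (V × V)) :
    IsHamCycle U B ↔ NatHam U B := by
  constructor
  · rintro ⟨n, f, hn, hinj, hcov, harc⟩
    refine ⟨n, fun j => f ⟨j % n, Nat.mod_lt _ hn⟩, hn, ?_, ?_, ?_, ?_⟩
    · intro i hi j hj h
      have := hinj h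
      have : i % n = j % n := congrArg Fin.val this
      rwa [Nat.mod_eq_of_lt hi, Nat.mod_eq_of_lt hj] at this
    · intro x
      rw [hcov x]
      constructor
      · rintro ⟨i, rfl⟩
        exact ⟨i.1, i.2, congrArg f (Fin.ext (Nat.mod_eq_of_lt i.2))⟩
      · rintro ⟨i, hi, h⟩
        exact ⟨⟨i % n, Nat.mod_lt _ hn⟩, h⟩
    · intro j
      exact congrArg f (Fin.ext (Nat.add_mod_right j n))
    · intro j
      have := harc ⟨j % n, Nat.mod_lt _ hn⟩
      convert this using 3
      simp only [cyclicSucc]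
      exact Fin.ext (by simp [Nat.mod_add_mod])
  · rintro ⟨N, F, hN, hinj, hcov, hper, harc⟩
    refine ⟨N, fun i => F i.1, hN, ?_, ?_, ?_⟩
    · intro i j h
      exact Fin.ext (hinj i.1 i.2 j.1 j.2 h)
    · intro x
      rw [hcov x]
      constructor
      · rintro ⟨i, hi, h⟩
        exact ⟨⟨i, hi⟩, h⟩
      · rintro ⟨i, h⟩
        exact ⟨i.1, i.2, h⟩
    · intro i
      have := harc i.1
      have h2 : F ((i.1 + 1) % N) = F (i.1 + 1) := (periodic_mod F N hN hper _).symm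
      simpa [cyclicSucc, h2] using this

lemma natham_rotate {V : Type*} [DecidableEq V] {U : Finset V} {B : Finset (V × V)}
    (h : NatHam U B) {x : V} (hx : x ∈ U) :
    ∃ (N : ℕ) (F : ℕ → V), 0 < N ∧
      (∀ i < N, ∀ j < N, F i = F j → i = j) ∧
      (∀ y : V, y ∈ U ↔ ∃ i < N, F i = y) ∧
      (∀ j, F (j + N) = F j) ∧
      (∀ j, (F j, F (j + 1)) ∈ B) ∧ F 0 = x := by
  obtain ⟨N, F, hN, hinj, hcov, hper, harc⟩ := h
  obtain ⟨r, hr, hrx⟩ := (hcov x).1 hx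
  have hmod := periodic_mod F N hN hper
  refine ⟨N, fun j => F (j + r), hN, ?_, ?_, ?_, ?_, ?_⟩
  · intro i hi j hj hij
    have h1 : F ((i + r) % N) = F ((j + r) % N) := by
      rw [← hmod, ← hmod]; exact hij
    have h2 := hinj _ (Nat.mod_lt _ hN) _ (Nat.mod_lt _ hN) h1
    have : i % N = j % N := Nat.ModEq.add_right_cancel' r h2
    rwa [Nat.mod_eq_of_lt hi, Nat.mod_eq_of_lt hj] at this
  · intro y
    rw [hcov y]
    constructor
    · rintro ⟨i, hi, rfl⟩
      refine ⟨(i + N - r) % N, Nat.mod_lt _ hN, ?_⟩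
      show F ((i + N - r) % N + r) = F i
      rw [hmod ((i + N - r) % N + r), Nat.mod_add_mod]
      have : i + N - r + r = i + N := Nat.sub_add_cancel (by omega)
      rw [this, Nat.add_mod_right, Nat.mod_eq_of_lt hi]
    · rintro ⟨i, hi, rfl⟩
      exact ⟨(i + r) % N, Nat.mod_lt _ hN, (hmod _).symm⟩
  · intro j
    show F (j + N + r) = F (j + r)
    rw [show j + N + r = j + r + N by ring, hper]
  · intro j
    show (F (j + r), F (j + 1 + r)) ∈ B
    rw [show j + 1 + r = j + r + 1 by ring]
    exact harc (j + r)
  · simpa using hrx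

lemma spliceMap_self {V : Type*} [DecidableEq V] (a b : V) : spliceMap a b a = b :=
  if_pos rfl

lemma spliceMap_ne {V : Type*} [DecidableEq V] (a b x : V) (h : x ≠ a) :
    spliceMap a b x = x := if_neg h

lemma sth_facts {V : Type*} [Fintype V] [DecidableEq V] {u v : V} (huv : u ≠ v)
    {V1 V2 : Finset V} (hdisj : Disjoint V1 V2)
    (hpart : V1 ∪ V2 = Finset.univ \ {u, v}) :
    u ∉ V1 ∧ u ∉ V2 ∧ v ∉ V1 ∧ v ∉ V2 ∧ (∀ x ∈ V1, x ∉ V2) ∧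
      (∀ x : V, x ∉ V1 → x ≠ u → x ≠ v → x ∈ V2) := by
  have key : ∀ x : V, x ∈ V1 ∨ x ∈ V2 ↔ ¬(x = u ∨ x = v) := by
    intro x
    have := Finset.ext_iff.1 hpart x
    simpa [Finset.mem_union, Finset.mem_sdiff, Finset.mem_insert] using this
  refine ⟨fun hh => (key u).1 (Or.inl hh) (Or.inl rfl),
    fun hh => (key u).1 (Or.inr hh) (Or.inl rfl),
    fun hh => (key v).1 (Or.inl hh) (Or.inr rfl),
    fun hh => (key v).1 (Or.inr hh) (Or.inr rfl),
    fun x h1 h2 => Finset.disjoint_left.1 hdisj h1 h2, ?_⟩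
  intro x h1 h2 h3
  rcases (key x).2 (by tauto) with h | h
  · exact absurd h h1
  · exact h

/-- First segment of a cycle, spliced. -/
def sthSeg1 {V : Type*} [DecidableEq V] (a b : V) (F : ℕ → V) (k : ℕ) : ℕ → V :=
  fun j => spliceMap a b (F (j % k))

/-- Second segment of a cycle, spliced. -/
def sthSeg2 {V : Type*} [DecidableEq V] (a b : V) (F : ℕ → V) (k n : ℕ) : ℕ → V :=
  fun j => spliceMap a b (F (k + j % n))

/-- Glued cycle. -/
def sthGlue {V : Type*} [DecidableEq V] (u v : V) (F1 F2 : ℕ → V) (k m : ℕ) : ℕ → V :=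
  fun j => if j % (k + m) < k then spliceMap u v (F1 (j % (k + m)))
    else spliceMap v u (F2 (j % (k + m) - k))

lemma sth_forward {V : Type*} [Fintype V] [DecidableEq V]
    (A : Finset (V × V)) (u v : V) (huv : u ≠ v)
    (V1 V2 : Finset V) (hdisj : Disjoint V1 V2)
    (hpart : V1 ∪ V2 = Finset.univ \ {u, v})
    (hsep : ∀ a ∈ A, ((a.1 ∈ V1 ∨ a.1 = v) ↔ (a.2 ∈ V1 ∨ a.2 = u)))
    (h : NatHam Finset.univ A) :
    NatHam (insert u V1) ((A.filter fun x => x.1 ∈ V1 ∨ x.1 = v).image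
        fun x => (spliceMap v u x.1, spliceMap v u x.2)) ∧
    NatHam (insert v V2) ((A.filter fun x => ¬ (x.1 ∈ V1 ∨ x.1 = v)).image
        fun x => (spliceMap u v x.1, spliceMap u v x.2)) := by
  obtain ⟨hu1, hu2, hv1, hv2, hd12, hcompl⟩ := sth_facts huv hdisj hpart
  obtain ⟨N, F, hN, hinj, hcov, hper, harc, hF0⟩ := natham_rotate h (Finset.mem_univ v)
  obtain ⟨k, hkN, hFk⟩ := (hcov u).1 (Finset.mem_univ u)
  have hk0 : 0 < k := by
    rcases Nat.eq_zero_or_pos k with rfl | h'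
    · exact absurd (hFk.symm.trans hF0) huv
    · exact h'
  have huniq : ∀ i, i < N → F i = u → i = k := fun i hi hh =>
    hinj i hi k hkN (hh.trans hFk.symm)
  have hvuniq : ∀ i, i < N → F i = v → i = 0 := fun i hi hh =>
    hinj i hi 0 hN (hh.trans hF0.symm)
  have claim1 : ∀ i, i < k → (F i ∈ V1 ∨ F i = v) := by
    intro i
    induction i with
    | zero => intro _; exact Or.inr hF0
    | succ i ih =>
      intro h'
      have hs := ih (by omega)
      rcases (hsep _ (harc i)).1 hs with h1 | h1
      · exact Or.inl h1
      · exact absurd (huniq (i + 1) (by omega) h1) (by omega)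
  have claim1' : ∀ i, 0 < i → i < k → F i ∈ V1 := by
    intro i h1 h2
    rcases claim1 i h2 with h' | h'
    · exact h'
    · exact absurd (hvuniq i (by omega) h') (by omega)
  have claim2 : ∀ d, k + 1 + d < N → F (k + 1 + d) ∈ V2 := by
    intro d
    induction d with
    | zero =>
      intro h'
      have hside : ¬ (F k ∈ V1 ∨ F k = v) := by
        rw [hFk]
        rintro (hh | hh)
        · exact hu1 hh
        · exact huv hh
      have h2 : ¬ (F (k + 1) ∈ V1 ∨ F (k + 1) = u) := fun hh =>
        hside ((hsep _ (harc k)).2 hh)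
      push_neg at h2
      have hnev : F (k + 1) ≠ v := fun hh =>
        absurd (hvuniq (k + 1) (by omega) hh) (by omega)
      show F (k + 1) ∈ V2
      exact hcompl _ h2.1 h2.2 hnev
    | succ d ih =>
      intro h'
      have hprev : F (k + 1 + d) ∈ V2 := ih (by omega)
      have hside : ¬ (F (k + 1 + d) ∈ V1 ∨ F (k + 1 + d) = v) := by
        rintro (hh | hh)
        · exact hd12 _ hh hprev
        · rw [hh] at hprev; exact hv2 hprev
      have h2 : ¬ (F (k + 1 + d + 1) ∈ V1 ∨ F (k + 1 + d + 1) = u) := fun hh =>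
        hside ((hsep _ (harc (k + 1 + d))).2 hh)
      push_neg at h2
      have hnev : F (k + 1 + d + 1) ≠ v := fun hh =>
        absurd (hvuniq _ (by omega) hh) (by omega)
      show F (k + 1 + d + 1) ∈ V2
      exact hcompl _ h2.1 h2.2 hnev
  have claim2' : ∀ i, k < i → i < N → F i ∈ V2 := by
    intro i h1 h2
    have := claim2 (i - k - 1) (by omega)
    rwa [show k + 1 + (i - k - 1) = i by omega] at this
  have hV1cov : ∀ x ∈ V1, ∃ i, 0 < i ∧ i < k ∧ F i = x := by
    intro x hx
    obtain ⟨i, hi, rfl⟩ := (hcov x).1 (Finset.mem_univ x)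
    refine ⟨i, ?_, ?_, rfl⟩
    · rcases Nat.eq_zero_or_pos i with rfl | h'
      · rw [hF0] at hx; exact absurd hx hv1
      · exact h'
    · by_contra hik
      push_neg at hik
      rcases Nat.eq_or_lt_of_le hik with h' | h'
      · rw [← h', hFk] at hx; exact hu1 hx
      · exact hd12 _ hx (claim2' i h' hi)
  have hV2cov : ∀ x ∈ V2, ∃ i, k < i ∧ i < N ∧ F i = x := by
    intro x hx
    obtain ⟨i, hi, rfl⟩ := (hcov x).1 (Finset.mem_univ x)
    refine ⟨i, ?_, hi, rfl⟩
    by_contra hik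
    push_neg at hik
    rcases Nat.eq_or_lt_of_le hik with h' | h'
    · rw [h', hFk] at hx; exact hu2 hx
    · rcases Nat.eq_zero_or_pos i with rfl | h''
      · rw [hF0] at hx; exact hv2 hx
      · exact hd12 _ (claim1' i h'' h') hx
  constructor
  · -- first spliced cycle
    have e' : ∀ i, i < k → sthSeg1 v u F k i = if i = 0 then u else F i := by
      intro i hi
      simp only [sthSeg1]
      rw [Nat.mod_eq_of_lt hi]
      rcases Nat.eq_zero_or_pos i with rfl | h'
      · rw [hF0, spliceMap_self, if_pos rfl]
      · have h1 : F i ∈ V1 := claim1' i h' hi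
        rw [spliceMap_ne _ _ _ (fun hh => hv1 (by rw [← hh]; exact h1)), if_neg (by omega)]
    refine ⟨k, sthSeg1 v u F k, hk0, ?_, ?_, ?_, ?_⟩
    · intro i hi j hj hij
      rw [e' i hi, e' j hj] at hij
      split_ifs at hij with h1 h2 h2
      · omega
      · exfalso; apply hu1; rw [hij]; exact claim1' j (Nat.pos_of_ne_zero h2) hj
      · exfalso; apply hu1; rw [← hij]; exact claim1' i (Nat.pos_of_ne_zero h1) hi
      · exact hinj i (by omega) j (by omega) hij
    · intro x
      constructor
      · intro hx
        rcases Finset.mem_insert.1 hx with rfl | hx1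
        · exact ⟨0, hk0, by rw [e' 0 hk0, if_pos rfl]⟩
        · obtain ⟨i, h1, h2, h3⟩ := hV1cov x hx1
          exact ⟨i, h2, by rw [e' i h2, if_neg (by omega)]; exact h3⟩
      · rintro ⟨i, hi, rfl⟩
        rw [e' i hi]
        split_ifs with h1
        · exact Finset.mem_insert_self u V1
        · exact Finset.mem_insert_of_mem (claim1' i (Nat.pos_of_ne_zero h1) hi)
    · intro j
      simp only [sthSeg1]
      rw [Nat.add_mod_right]
    · intro j
      have hr : j % k < k := Nat.mod_lt _ hk0
      refine Finset.mem_image.2 ⟨(F (j % k), F (j % k + 1)),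
        Finset.mem_filter.2 ⟨harc (j % k), claim1 _ hr⟩, ?_⟩
      have hsec : spliceMap v u (F (j % k + 1)) = spliceMap v u (F ((j + 1) % k)) := by
        rcases Nat.lt_or_ge (j % k + 1) k with hlt | hge
        · rw [show (j + 1) % k = j % k + 1 from by
            rw [← Nat.mod_add_mod]; exact Nat.mod_eq_of_lt hlt]
        · have hek : j % k + 1 = k := by omega
          rw [show (j + 1) % k = 0 from by rw [← Nat.mod_add_mod, hek, Nat.mod_self],
            hF0, hek, hFk, spliceMap_self, spliceMap_ne _ _ _ huv]
      simp only [sthSeg1]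
      exact Prod.ext rfl hsec
  · -- second spliced cycle
    have hn2 : 0 < N - k := by omega
    have e' : ∀ i, i < N - k → sthSeg2 u v F k (N - k) i = if i = 0 then v else F (k + i) := by
      intro i hi
      simp only [sthSeg2]
      rw [Nat.mod_eq_of_lt hi]
      rcases Nat.eq_zero_or_pos i with rfl | h'
      · rw [if_pos rfl]
        show spliceMap u v (F k) = v
        rw [hFk, spliceMap_self]
      · have h1 : F (k + i) ∈ V2 := claim2' (k + i) (by omega) (by omega)
        rw [spliceMap_ne _ _ _ (fun hh => hu2 (by rw [← hh]; exact h1)), if_neg (by omega)]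
    refine ⟨N - k, sthSeg2 u v F k (N - k), hn2, ?_, ?_, ?_, ?_⟩
    · intro i hi j hj hij
      rw [e' i hi, e' j hj] at hij
      split_ifs at hij with h1 h2 h2
      · omega
      · exfalso; apply hv2; rw [hij]
        exact claim2' (k + j) (by omega) (by omega)
      · exfalso; apply hv2; rw [← hij]
        exact claim2' (k + i) (by omega) (by omega)
      · have := hinj (k + i) (by omega) (k + j) (by omega) hij
        omega
    · intro x
      constructor
      · intro hx
        rcases Finset.mem_insert.1 hx with rfl | hx1
        · exact ⟨0, hn2, by rw [e' 0 hn2, if_pos rfl]⟩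
        · obtain ⟨i, h1, h2, h3⟩ := hV2cov x hx1
          refine ⟨i - k, by omega, ?_⟩
          rw [e' (i - k) (by omega), if_neg (by omega),
            show k + (i - k) = i by omega]
          exact h3
      · rintro ⟨i, hi, rfl⟩
        rw [e' i hi]
        split_ifs with h1
        · exact Finset.mem_insert_self v V2
        · exact Finset.mem_insert_of_mem (claim2' (k + i) (by omega) (by omega))
    · intro j
      simp only [sthSeg2]
      rw [Nat.add_mod_right]
    · intro j
      have hr : j % (N - k) < N - k := Nat.mod_lt _ hn2
      have hside : ¬ (F (k + j % (N - k)) ∈ V1 ∨ F (k + j % (N - k)) = v) := by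
        rcases Nat.eq_zero_or_pos (j % (N - k)) with he | he
        · rw [he]
          show ¬ (F (k + 0) ∈ V1 ∨ F (k + 0) = v)
          rw [Nat.add_zero, hFk]
          rintro (hh | hh)
          · exact hu1 hh
          · exact huv hh
        · have h1 : F (k + j % (N - k)) ∈ V2 := claim2' _ (by omega) (by omega)
          rintro (hh | hh)
          · exact hd12 _ hh h1
          · rw [hh] at h1; exact hv2 h1
      refine Finset.mem_image.2 ⟨(F (k + j % (N - k)), F (k + j % (N - k) + 1)),
        Finset.mem_filter.2 ⟨harc _, hside⟩, ?_⟩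
      have hsec : spliceMap u v (F (k + j % (N - k) + 1)) =
          spliceMap u v (F (k + (j + 1) % (N - k))) := by
        rcases Nat.lt_or_ge (j % (N - k) + 1) (N - k) with hlt | hge
        · rw [show (j + 1) % (N - k) = j % (N - k) + 1 from by
            rw [← Nat.mod_add_mod]; exact Nat.mod_eq_of_lt hlt]
          rw [show k + (j % (N - k) + 1) = k + j % (N - k) + 1 by omega]
        · have hek : j % (N - k) + 1 = N - k := by omega
          have hNidx : k + j % (N - k) + 1 = N := by omega
          have hFN : F (k + j % (N - k) + 1) = v := by
            rw [hNidx, show N = 0 + N from (Nat.zero_add N).symm, hper, hF0]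
          rw [show (j + 1) % (N - k) = 0 from by
            rw [← Nat.mod_add_mod, hek, Nat.mod_self]]
          rw [hFN, Nat.add_zero, hFk, spliceMap_self, spliceMap_ne _ _ _ huv.symm]
      simp only [sthSeg2]
      exact Prod.ext rfl hsec

lemma sth_backward {V : Type*} [Fintype V] [DecidableEq V]
    (A : Finset (V × V)) (u v : V) (huv : u ≠ v)
    (V1 V2 : Finset V) (hdisj : Disjoint V1 V2)
    (hpart : V1 ∪ V2 = Finset.univ \ {u, v})
    (hsep : ∀ a ∈ A, ((a.1 ∈ V1 ∨ a.1 = v) ↔ (a.2 ∈ V1 ∨ a.2 = u)))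
    (h1 : NatHam (insert u V1) ((A.filter fun x => x.1 ∈ V1 ∨ x.1 = v).image
        fun x => (spliceMap v u x.1, spliceMap v u x.2)))
    (h2 : NatHam (insert v V2) ((A.filter fun x => ¬ (x.1 ∈ V1 ∨ x.1 = v)).image
        fun x => (spliceMap u v x.1, spliceMap u v x.2))) :
    NatHam Finset.univ A := by
  obtain ⟨hu1, hu2, hv1, hv2, hd12, hcompl⟩ := sth_facts huv hdisj hpart
  obtain ⟨k, F1, hk, hinj1, hcov1, hper1, harc1, hF10⟩ :=
    natham_rotate h1 (Finset.mem_insert_self u V1)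
  obtain ⟨m, F2, hm, hinj2, hcov2, hper2, harc2, hF20⟩ :=
    natham_rotate h2 (Finset.mem_insert_self v V2)
  -- pull-back lemmas
  have pb1 : ∀ x y : V, (x, y) ∈ ((A.filter fun a => a.1 ∈ V1 ∨ a.1 = v).image
      fun a => (spliceMap v u a.1, spliceMap v u a.2)) →
      (spliceMap u v x, y) ∈ A ∧ (x ∈ V1 ∨ x = u) ∧ (y ∈ V1 ∨ y = u) := by
    intro x y hxy
    obtain ⟨a, ha, heq⟩ := Finset.mem_image.1 hxy
    obtain ⟨haA, hat⟩ := Finset.mem_filter.1 ha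
    have hh : a.2 ∈ V1 ∨ a.2 = u := (hsep a haA).1 hat
    have ha2v : a.2 ≠ v := by
      rintro hv'
      rcases hh with h' | h'
      · rw [hv'] at h'; exact hv1 h'
      · rw [hv'] at h'; exact huv h'.symm
    have hfst : spliceMap v u a.1 = x := congrArg Prod.fst heq
    have hsnd : spliceMap v u a.2 = y := congrArg Prod.snd heq
    rw [spliceMap_ne _ _ _ ha2v] at hsnd
    rcases hat with hT | hT
    · have ha1v : a.1 ≠ v := fun hh' => hv1 (hh' ▸ hT)
      rw [spliceMap_ne _ _ _ ha1v] at hfst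
      have hxu : x ≠ u := fun hh' => hu1 (by rw [← hfst] at hh'; rw [← hh']; exact hT)
      refine ⟨?_, Or.inl (hfst ▸ hT), by rw [← hsnd]; exact hh⟩
      rw [spliceMap_ne _ _ _ hxu, ← hfst, ← hsnd]
      exact haA
    · have hx : x = u := by rw [← hfst, hT, spliceMap_self]
      refine ⟨?_, Or.inr hx, by rw [← hsnd]; exact hh⟩
      rw [hx, spliceMap_self, ← hT, ← hsnd]
      exact haA
  have pb2 : ∀ x y : V, (x, y) ∈ ((A.filter fun a => ¬ (a.1 ∈ V1 ∨ a.1 = v)).image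
      fun a => (spliceMap u v a.1, spliceMap u v a.2)) →
      (spliceMap v u x, y) ∈ A ∧ (x ∈ V2 ∨ x = v) ∧ (y ∈ V2 ∨ y = v) := by
    intro x y hxy
    obtain ⟨a, ha, heq⟩ := Finset.mem_image.1 hxy
    obtain ⟨haA, hat⟩ := Finset.mem_filter.1 ha
    have hh' : ¬ (a.2 ∈ V1 ∨ a.2 = u) := fun hz => hat ((hsep a haA).2 hz)
    push_neg at hat hh'
    have hh : a.2 ∈ V2 ∨ a.2 = v := by
      by_cases hc : a.2 = v
      · exact Or.inr hc
      · exact Or.inl (hcompl _ hh'.1 hh'.2 hc)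
    have hfst : spliceMap u v a.1 = x := congrArg Prod.fst heq
    have hsnd : spliceMap u v a.2 = y := congrArg Prod.snd heq
    rw [spliceMap_ne _ _ _ hh'.2] at hsnd
    by_cases hT : a.1 = u
    · have hx : x = v := by rw [← hfst, hT, spliceMap_self]
      refine ⟨?_, Or.inr hx, by rw [← hsnd]; exact hh⟩
      rw [hx, spliceMap_self, ← hT, ← hsnd]
      exact haA
    · have ha1V2 : a.1 ∈ V2 := hcompl _ hat.1 hT hat.2
      rw [spliceMap_ne _ _ _ hT] at hfst
      have hxv : x ≠ v := fun hh'' => hv2 (by rw [← hfst] at hh''; rw [← hh'']; exact ha1V2)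
      refine ⟨?_, Or.inl (hfst ▸ ha1V2), by rw [← hsnd]; exact hh⟩
      rw [spliceMap_ne _ _ _ hxv, ← hfst, ← hsnd]
      exact haA
  -- membership of segment values
  have f1V1 : ∀ i, 0 < i → i < k → F1 i ∈ V1 := by
    intro i hi1 hi2
    have hmem : F1 i ∈ insert u V1 := (hcov1 _).2 ⟨i, hi2, rfl⟩
    rcases Finset.mem_insert.1 hmem with h' | h'
    · exact absurd (hinj1 i hi2 0 hk (h'.trans hF10.symm)) (by omega)
    · exact h'
  have f2V2 : ∀ i, 0 < i → i < m → F2 i ∈ V2 := by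
    intro i hi1 hi2
    have hmem : F2 i ∈ insert v V2 := (hcov2 _).2 ⟨i, hi2, rfl⟩
    rcases Finset.mem_insert.1 hmem with h' | h'
    · exact absurd (hinj2 i hi2 0 hm (h'.trans hF20.symm)) (by omega)
    · exact h'
  have hM : 0 < k + m := by omega
  have gval : ∀ r, r < k + m → sthGlue u v F1 F2 k m r =
      if r < k then (if r = 0 then v else F1 r) else (if r = k then u else F2 (r - k)) := by
    intro r hr
    simp only [sthGlue]
    rw [Nat.mod_eq_of_lt hr]
    by_cases h1' : r < k
    · rw [if_pos h1', if_pos h1']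
      rcases Nat.eq_zero_or_pos r with rfl | hpos
      · rw [hF10, spliceMap_self, if_pos rfl]
      · rw [if_neg (by omega),
          spliceMap_ne _ _ _ (fun hh => hu1 (by rw [← hh]; exact f1V1 r hpos h1'))]
    · rw [if_neg h1', if_neg h1']
      by_cases h2' : r = k
      · rw [if_pos h2', h2', Nat.sub_self, hF20, spliceMap_self]
      · have hpos : 0 < r - k := by omega
        have hlt : r - k < m := by omega
        rw [if_neg h2',
          spliceMap_ne _ _ _ (fun hh => hv2 (by rw [← hh]; exact f2V2 _ hpos hlt))]
  refine ⟨k + m, sthGlue u v F1 F2 k m, hM, ?_, ?_, ?_, ?_⟩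
  · -- injectivity
    have classify : ∀ r, r < k + m → r = 0 ∨ (0 < r ∧ r < k) ∨ r = k ∨ (k < r ∧ r < k + m) := by
      intro r _; omega
    intro i hi j hj hij
    rw [gval i hi, gval j hj] at hij
    rcases classify i hi with hc | hc | hc | hc <;>
      rcases classify j hj with hd | hd | hd | hd
    · omega
    · rw [if_pos (show i < k by omega), if_pos hc, if_pos hd.2, if_neg (by omega)] at hij
      exfalso; apply hv1; rw [hij]; exact f1V1 j hd.1 hd.2
    · rw [if_pos (show i < k by omega), if_pos hc, if_neg (show ¬ j < k by omega),
        if_pos hd] at hij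
      exact absurd hij huv.symm
    · rw [if_pos (show i < k by omega), if_pos hc, if_neg (by omega), if_neg (by omega)] at hij
      exfalso; apply hv2; rw [hij]; exact f2V2 (j - k) (by omega) (by omega)
    · rw [if_pos hc.2, if_neg (by omega), if_pos (show j < k by omega), if_pos hd] at hij
      exfalso; apply hv1; rw [← hij]; exact f1V1 i hc.1 hc.2
    · rw [if_pos hc.2, if_neg (by omega), if_pos hd.2, if_neg (by omega)] at hij
      exact hinj1 i hc.2 j hd.2 hij
    · rw [if_pos hc.2, if_neg (by omega), if_neg (by omega), if_pos hd] at hij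
      exfalso; apply hu1; rw [← hij]; exact f1V1 i hc.1 hc.2
    · rw [if_pos hc.2, if_neg (by omega), if_neg (by omega), if_neg (by omega)] at hij
      exact absurd (by rw [hij]; exact f2V2 (j - k) (by omega) (by omega))
        (hd12 _ (f1V1 i hc.1 hc.2))
    · rw [if_neg (by omega), if_pos hc, if_pos (show j < k by omega), if_pos hd] at hij
      exact absurd hij huv
    · rw [if_neg (by omega), if_pos hc, if_pos hd.2, if_neg (by omega)] at hij
      exfalso; apply hu1; rw [hij]; exact f1V1 j hd.1 hd.2
    · omega
    · rw [if_neg (by omega), if_pos hc, if_neg (by omega), if_neg (by omega)] at hij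
      exfalso; apply hu2; rw [hij]; exact f2V2 (j - k) (by omega) (by omega)
    · rw [if_neg (by omega), if_neg (by omega), if_pos (show j < k by omega), if_pos hd] at hij
      exfalso; apply hv2; rw [← hij]; exact f2V2 (i - k) (by omega) (by omega)
    · rw [if_neg (by omega), if_neg (by omega), if_pos hd.2, if_neg (by omega)] at hij
      exact absurd (by rw [← hij]; exact f2V2 (i - k) (by omega) (by omega))
        (hd12 _ (f1V1 j hd.1 hd.2))
    · rw [if_neg (by omega), if_neg (by omega), if_neg (by omega), if_pos hd] at hij
      exfalso; apply hu2; rw [← hij]; exact f2V2 (i - k) (by omega) (by omega)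
    · rw [if_neg (by omega), if_neg (by omega), if_neg (by omega), if_neg (by omega)] at hij
      have := hinj2 (i - k) (by omega) (j - k) (by omega) hij
      omega
  · -- coverage
    intro x
    constructor
    · intro _
      by_cases hxu : x = u
      · refine ⟨k, by omega, ?_⟩
        rw [gval k (by omega), if_neg (by omega), if_pos rfl, hxu]
      · by_cases hxv : x = v
        · refine ⟨0, by omega, ?_⟩
          rw [gval 0 hM, if_pos hk, if_pos rfl, hxv]
        · by_cases hx1 : x ∈ V1
          · obtain ⟨i, hi, hFi⟩ := (hcov1 x).1 (Finset.mem_insert_of_mem hx1)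
            have hi0 : i ≠ 0 := fun hh =>
              hu1 (by rw [← hFi, hh, hF10] at hx1; exact hx1)
            refine ⟨i, by omega, ?_⟩
            rw [gval i (by omega), if_pos hi, if_neg hi0]
            exact hFi
          · have hx2 : x ∈ V2 := hcompl x hx1 hxu hxv
            obtain ⟨i, hi, hFi⟩ := (hcov2 x).1 (Finset.mem_insert_of_mem hx2)
            have hi0 : i ≠ 0 := fun hh =>
              hv2 (by rw [← hFi, hh, hF20] at hx2; exact hx2)
            refine ⟨k + i, by omega, ?_⟩
            rw [gval (k + i) (by omega), if_neg (by omega), if_neg (by omega),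
              Nat.add_sub_cancel_left]
            exact hFi
    · intro _
      exact Finset.mem_univ x
  · -- periodicity
    intro j
    simp only [sthGlue]
    rw [Nat.add_mod_right]
  · -- arcs
    intro j
    have hr : j % (k + m) < k + m := Nat.mod_lt _ hM
    have hnext : (j + 1) % (k + m) = (j % (k + m) + 1) % (k + m) := by
      rw [Nat.mod_add_mod]
    by_cases h1' : j % (k + m) < k
    · have harc' := pb1 (F1 (j % (k + m))) (F1 (j % (k + m) + 1)) (harc1 (j % (k + m)))
      have hGj : sthGlue u v F1 F2 k m j = spliceMap u v (F1 (j % (k + m))) := by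
        simp only [sthGlue]; rw [if_pos h1']
      have hGj1 : sthGlue u v F1 F2 k m (j + 1) = F1 (j % (k + m) + 1) := by
        by_cases h2' : j % (k + m) + 1 < k
        · have hnx : (j + 1) % (k + m) = j % (k + m) + 1 := by
            rw [hnext]; exact Nat.mod_eq_of_lt (by omega)
          simp only [sthGlue]
          rw [hnx, if_pos h2',
            spliceMap_ne _ _ _ (fun hh => hu1 (by rw [← hh]; exact f1V1 _ (by omega) h2'))]
        · have hrk : j % (k + m) + 1 = k := by omega
          have hF1k : F1 (j % (k + m) + 1) = u := by
            rw [hrk, show k = 0 + k from (Nat.zero_add k).symm, hper1, hF10]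
          have hnx : (j + 1) % (k + m) = k := by
            rw [hnext, hrk]; exact Nat.mod_eq_of_lt (by omega)
          simp only [sthGlue]
          rw [hnx, if_neg (lt_irrefl k), Nat.sub_self, hF20, spliceMap_self, hF1k]
      rw [hGj, hGj1]
      exact harc'.1
    · have hs : j % (k + m) - k < m := by omega
      have harc' := pb2 (F2 (j % (k + m) - k)) (F2 (j % (k + m) - k + 1))
        (harc2 (j % (k + m) - k))
      have hGj : sthGlue u v F1 F2 k m j = spliceMap v u (F2 (j % (k + m) - k)) := by
        simp only [sthGlue]; rw [if_neg h1']
      have hGj1 : sthGlue u v F1 F2 k m (j + 1) = F2 (j % (k + m) - k + 1) := by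
        by_cases h2' : j % (k + m) + 1 < k + m
        · have hnx : (j + 1) % (k + m) = j % (k + m) + 1 := by
            rw [hnext]; exact Nat.mod_eq_of_lt h2'
          simp only [sthGlue]
          rw [hnx, if_neg (by omega), show j % (k + m) + 1 - k = j % (k + m) - k + 1 by omega,
            spliceMap_ne _ _ _
              (fun hh => hv2 (by rw [← hh]; exact f2V2 _ (by omega) (by omega)))]
        · have hrM : j % (k + m) + 1 = k + m := by omega
          have hF2m : F2 (j % (k + m) - k + 1) = v := by
            rw [show j % (k + m) - k + 1 = m by omega,
              show m = 0 + m from (Nat.zero_add m).symm, hper2, hF20]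
          have hnx : (j + 1) % (k + m) = 0 := by
            rw [hnext, hrM, Nat.mod_self]
          simp only [sthGlue]
          rw [hnx, if_pos hk, hF10, spliceMap_self, hF2m]
      rw [hGj, hGj1]
      exact harc'.1

theorem split_two_ham_iff {V : Type*} [Fintype V] [DecidableEq V]
    (A : Finset (V × V))
    (hreg : ∀ v : V, inDeg A v = 2 ∧ outDeg A v = 2)
    (hodd : AllFactorsOdd A Finset.univ)
    (u v : V) (huv : u ≠ v)
    (hconn : SplitConnected A (∅ : Finset V))
    (hsplit : ¬ SplitConnected A {u, v})
    (hmin : ∀ T ⊂ ({u, v} : Finset V), SplitConnected A T)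
    (V1 V2 : Finset V) (hdisj : Disjoint V1 V2)
    (hpart : V1 ∪ V2 = Finset.univ \ {u, v})
    (hsep : ∀ a ∈ A, ((a.1 ∈ V1 ∨ a.1 = v) ↔ (a.2 ∈ V1 ∨ a.2 = u))) :
    IsHamCycle Finset.univ A ↔
      (IsHamCycle (insert u V1) ((A.filter fun x => x.1 ∈ V1 ∨ x.1 = v).image
          fun x => (spliceMap v u x.1, spliceMap v u x.2)) ∧
       IsHamCycle (insert v V2) ((A.filter fun x => ¬ (x.1 ∈ V1 ∨ x.1 = v)).image
          fun x => (spliceMap u v x.1, spliceMap u v x.2))) := by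
  rw [ham_iff_natham, ham_iff_natham, ham_iff_natham]
  constructor
  · intro h
    exact sth_forward A u v huv V1 V2 hdisj hpart hsep h
  · rintro ⟨ha, hb⟩
    exact sth_backward A u v huv V1 V2 hdisj hpart hsep ha hb
end

section
/- Let G be an odd 2-diregular digraph with minimal split-set S = {u,v} as above, giving spliced 2-dds G'_1 and G'_2. If G'_1 is even (every factor of G'_1 has an even number of cycles), then G'_2 is also even; in particular G is then non-Hamiltonian. -/
lemma units_neg_one_pow_eq_iff (a b : ℕ) : ((-1:ℤˣ)^a = (-1)^b) ↔ a % 2 = b % 2 := by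
  rcases Nat.even_or_odd a with ha | ha <;> rcases Nat.even_or_odd b with hb | hb <;>
    simp [ha.neg_one_pow, hb.neg_one_pow, Nat.even_iff, Nat.odd_iff] at * <;> omega

lemma sign_eq_cycleCountOn {V : Type*} [Fintype V] [DecidableEq V] (U : Finset V)
    (σ : Equiv.Perm V) (hfix : ∀ x ∉ U, σ x = x) :
    Equiv.Perm.sign σ = (-1 : ℤˣ) ^ (U.card + cycleCountOn U σ) := by
  have hsupp : σ.support = U.filter (fun x => ¬ σ x = x) := by
    ext x
    simp only [Equiv.Perm.mem_support, Finset.mem_filter]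
    constructor
    · intro h
      refine ⟨?_, h⟩
      by_contra hx
      exact h (hfix x hx)
    · exact fun h => h.2
  have hcard : (U.filter (fun x => σ x = x)).card + σ.support.card = U.card := by
    rw [hsupp]; exact Finset.card_filter_add_card_filter_not _
  rw [Equiv.Perm.sign_of_cycleType, Equiv.Perm.sum_cycleType,
    units_neg_one_pow_eq_iff]
  unfold cycleCountOn
  omega

lemma cycleCountOn_eq_one {V : Type*} [Fintype V] [DecidableEq V] (U : Finset V)
    (σ : Equiv.Perm V) (v : V) (hv : v ∈ U)
    (hfix : ∀ x ∉ U, σ x = x) (horb : ∀ x ∈ U, ∃ k, σ^[k] v = x) :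
    cycleCountOn U σ = 1 := by
  have hiter : ∀ (k : ℕ) (x : V), σ^[k] x = (σ^k) x :=
    fun k x => (congrFun (Equiv.Perm.coe_pow σ k) x).symm
  have hfixiter : ∀ k, σ (σ^[k] v) = σ^[k] v → σ v = v := by
    intro k h
    have h2 : σ^[k] (σ v) = σ^[k] v := by
      rw [← Function.iterate_succ_apply, Function.iterate_succ_apply', h]
    exact σ.injective.iterate k h2
  by_cases hσv : σ v = v
  · have hU : ∀ x ∈ U, x = v := by
      intro x hx
      obtain ⟨k, hk⟩ := horb x hx
      rw [← hk, Function.iterate_fixed hσv]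
    have hone : σ = 1 := Equiv.ext fun x => by
      by_cases hx : x ∈ U
      · rw [hU x hx]; exact hσv
      · exact hfix x hx
    have hUs : U = {v} := Finset.eq_singleton_iff_unique_mem.mpr ⟨hv, hU⟩
    rw [hone]
    unfold cycleCountOn
    simp [hUs]
  · have hcyc : σ.IsCycle := by
      refine ⟨v, hσv, fun y hy => ?_⟩
      have hyU : y ∈ U := by
        by_contra h; exact hy (hfix y h)
      obtain ⟨k, hk⟩ := horb y hyU
      exact ⟨(k : ℤ), by rw [zpow_natCast, ← hiter k v, hk]⟩
    have hnofix : U.filter (fun x => σ x = x) = ∅ := by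
      rw [Finset.filter_eq_empty_iff]
      intro x hx hfx
      obtain ⟨k, hk⟩ := horb x hx
      exact hσv (hfixiter k (by rw [hk]; exact hfx))
    unfold cycleCountOn
    rw [hcyc.cycleType, hnofix]
    simp

lemma mk_perm_inj {V : Type*} [Fintype V] [DecidableEq V] (U : Finset V) (g : V → V)
    (hU : ∀ x ∈ U, g x ∈ U) (hinj : Set.InjOn g U) (hfix : ∀ x ∉ U, g x = x) :
    Function.Bijective g := by
  rw [← Finite.injective_iff_bijective]
  intro x y hxy
  by_cases hx : x ∈ U <;> by_cases hy : y ∈ U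
  · exact hinj hx hy hxy
  · exact absurd (hfix y hy ▸ hxy ▸ hU x hx) hy
  · exact absurd ((hfix x hx).symm ▸ hxy ▸ hU y hy) hx
  · rw [← hfix x hx, hxy, hfix y hy]

theorem split_even_implies_even_nonham {V : Type*} [Fintype V] [DecidableEq V]
    (A : Finset (V × V))
    (hreg : ∀ v : V, inDeg A v = 2 ∧ outDeg A v = 2)
    (hodd : AllFactorsOdd A Finset.univ)
    (u v : V) (huv : u ≠ v)
    (hconn : SplitConnected A (∅ : Finset V))
    (hsplit : ¬ SplitConnected A {u, v})
    (hmin : ∀ T ⊂ ({u, v} : Finset V), SplitConnected A T)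
    (V1 V2 : Finset V) (hdisj : Disjoint V1 V2)
    (hpart : V1 ∪ V2 = Finset.univ \ {u, v})
    (hsep : ∀ a ∈ A, ((a.1 ∈ V1 ∨ a.1 = v) ↔ (a.2 ∈ V1 ∨ a.2 = u)))
    (heven1 : AllFactorsEven ((A.filter fun x => x.1 ∈ V1 ∨ x.1 = v).image
        fun x => (spliceMap v u x.1, spliceMap v u x.2)) (insert u V1)) :
    AllFactorsEven ((A.filter fun x => ¬ (x.1 ∈ V1 ∨ x.1 = v)).image
        fun x => (spliceMap u v x.1, spliceMap u v x.2)) (insert v V2) ∧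
    ¬ IsHamCycle Finset.univ A := by
  classical
  set U1 : Finset V := insert u V1 with hU1def
  set U2 : Finset V := insert v V2 with hU2def
  set A1 : Finset (V × V) := ((A.filter fun x => x.1 ∈ V1 ∨ x.1 = v).image
      fun x => (spliceMap v u x.1, spliceMap v u x.2)) with hA1def
  set A2 : Finset (V × V) := ((A.filter fun x => ¬ (x.1 ∈ V1 ∨ x.1 = v)).image
      fun x => (spliceMap u v x.1, spliceMap u v x.2)) with hA2def
  have hvu : v ≠ u := huv.symm
  have hnotin : ∀ x ∈ V1 ∪ V2, x ≠ u ∧ x ≠ v := by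
    intro x hx
    rw [hpart, Finset.mem_sdiff] at hx
    simp only [Finset.mem_insert, Finset.mem_singleton] at hx
    exact ⟨fun h => hx.2 (Or.inl h), fun h => hx.2 (Or.inr h)⟩
  have hu1 : u ∉ V1 := fun h => (hnotin u (Finset.mem_union_left _ h)).1 rfl
  have hv1 : v ∉ V1 := fun h => (hnotin v (Finset.mem_union_left _ h)).2 rfl
  have hu2 : u ∉ V2 := fun h => (hnotin u (Finset.mem_union_right _ h)).1 rfl
  have hv2 : v ∉ V2 := fun h => (hnotin v (Finset.mem_union_right _ h)).2 rfl
  have hcases : ∀ x : V, x ∈ V1 ∨ x ∈ V2 ∨ x = u ∨ x = v := by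
    intro x
    by_cases h1 : x = u
    · tauto
    by_cases h2 : x = v
    · tauto
    have hx : x ∈ V1 ∪ V2 := by
      rw [hpart, Finset.mem_sdiff]
      simp [h1, h2]
    rcases Finset.mem_union.mp hx with h | h <;> tauto
  have h12 : ∀ x ∈ V1, x ∉ V2 := fun x hx => Finset.disjoint_left.mp hdisj hx
  have hsplice_vu : ∀ x, x ≠ v → spliceMap v u x = x := by
    intro x hx; simp [spliceMap, hx]
  have hsplice_uv : ∀ x, x ≠ u → spliceMap u v x = x := by
    intro x hx; simp [spliceMap, hx]
  have hsvv : spliceMap v u v = u := by simp [spliceMap]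
  have hsuu : spliceMap u v u = v := by simp [spliceMap]
  -- membership characterizations of A1 and A2
  have hA1_elim : ∀ x y : V, (x, y) ∈ A1 →
      ((x ∈ V1 ∧ (x, y) ∈ A) ∨ (x = u ∧ (v, y) ∈ A)) ∧ (y ∈ V1 ∨ y = u) := by
    intro x y hxy
    rw [hA1def] at hxy
    obtain ⟨a, ha, heq⟩ := Finset.mem_image.mp hxy
    obtain ⟨haA, hatail⟩ := Finset.mem_filter.mp ha
    have hhead : a.2 ∈ V1 ∨ a.2 = u := (hsep a haA).mp hatail
    have ha2v : a.2 ≠ v := by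
      rcases hhead with h | h
      · exact fun e => hv1 (e ▸ h)
      · exact fun e => hvu (e ▸ h.symm ▸ rfl)
    have hy : y = a.2 := by
      have := congrArg Prod.snd heq
      simp only at this
      rw [← this, hsplice_vu _ ha2v]
    have hx : x = spliceMap v u a.1 := by
      have := congrArg Prod.fst heq
      simp only at this
      exact this.symm
    subst hy
    refine ⟨?_, hhead⟩
    rcases hatail with h | h
    · left
      have ha1v : a.1 ≠ v := fun e => hv1 (e ▸ h)
      rw [hx, hsplice_vu _ ha1v]
      exact ⟨h, haA⟩
    · right
      rw [hx, h, hsvv]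
      exact ⟨rfl, by rw [← h]; exact haA⟩
  have hA2_elim : ∀ x y : V, (x, y) ∈ A2 →
      ((x ∈ V2 ∧ (x, y) ∈ A) ∨ (x = v ∧ (u, y) ∈ A)) ∧ (y ∈ V2 ∨ y = v) := by
    intro x y hxy
    rw [hA2def] at hxy
    obtain ⟨a, ha, heq⟩ := Finset.mem_image.mp hxy
    obtain ⟨haA, hatail⟩ := Finset.mem_filter.mp ha
    push_neg at hatail
    have hhead : ¬ (a.2 ∈ V1 ∨ a.2 = u) := fun h => by
      rcases hatail with ⟨h1, h2⟩
      exact (by tauto : ¬ (a.1 ∈ V1 ∨ a.1 = v)) ((hsep a haA).mpr h)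
    push_neg at hhead
    have hhead2 : a.2 ∈ V2 ∨ a.2 = v := by
      rcases hcases a.2 with h | h | h | h
      · exact absurd h hhead.1
      · tauto
      · exact absurd h hhead.2
      · tauto
    have hy : y = a.2 := by
      have := congrArg Prod.snd heq
      simp only at this
      rw [← this, hsplice_uv _ hhead.2]
    have hx : x = spliceMap u v a.1 := by
      have := congrArg Prod.fst heq
      simp only at this
      exact this.symm
    subst hy
    refine ⟨?_, hhead2⟩
    have ha1 : a.1 ∈ V2 ∨ a.1 = u := by
      rcases hcases a.1 with h | h | h | h
      · exact absurd h hatail.1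
      · tauto
      · tauto
      · exact absurd h hatail.2
    rcases ha1 with h | h
    · left
      have ha1u : a.1 ≠ u := fun e => hu2 (e ▸ h)
      rw [hx, hsplice_uv _ ha1u]
      exact ⟨h, haA⟩
    · right
      rw [hx, h, hsuu]
      exact ⟨rfl, by rw [← h]; exact haA⟩
  have hA1_intro : ∀ a : V × V, a ∈ A → (a.1 ∈ V1 ∨ a.1 = v) → (spliceMap v u a.1, a.2) ∈ A1 := by
    intro a ha h1
    have hhead : a.2 ∈ V1 ∨ a.2 = u := (hsep a ha).mp h1
    have ha2v : a.2 ≠ v := by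
      rcases hhead with h | h
      · exact fun e => hv1 (e ▸ h)
      · exact fun e => hvu (e ▸ h.symm ▸ rfl)
    rw [hA1def]
    refine Finset.mem_image.mpr ⟨a, Finset.mem_filter.mpr ⟨ha, h1⟩, ?_⟩
    rw [hsplice_vu _ ha2v]
  have hA2_intro : ∀ a : V × V, a ∈ A → ¬ (a.1 ∈ V1 ∨ a.1 = v) → (spliceMap u v a.1, a.2) ∈ A2 := by
    intro a ha h1
    have hhead : ¬ (a.2 ∈ V1 ∨ a.2 = u) := fun h => h1 ((hsep a ha).mpr h)
    push_neg at hhead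
    rw [hA2def]
    refine Finset.mem_image.mpr ⟨a, Finset.mem_filter.mpr ⟨ha, h1⟩, ?_⟩
    rw [hsplice_uv _ hhead.2]
  -- Step 1: existence of a factor of (A1, U1), by Hall's theorem
  have hσ1ex : ∃ σ1 : Equiv.Perm V, IsFactorPerm A1 U1 σ1 := by
    set t : V → Finset V := fun x =>
      if x ∈ U1 then ((A.filter fun a => a.1 = spliceMap u v x).image fun a => spliceMap v u a.2)
      else {x} with htdef
    have htpos : ∀ x ∈ U1, t x =
        ((A.filter fun a => a.1 = spliceMap u v x).image fun a => spliceMap v u a.2) := by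
      intro x hx; simp only [htdef, if_pos hx]
    have htneg : ∀ x ∉ U1, t x = {x} := by
      intro x hx; simp only [htdef, if_neg hx]
    have hU1tail : ∀ x ∈ U1, spliceMap u v x ∈ V1 ∨ spliceMap u v x = v := by
      intro x hx
      rcases Finset.mem_insert.mp hx with h | h
      · right; rw [h, hsuu]
      · left; rw [hsplice_uv x (fun e => hu1 (e ▸ h))]; exact h
    have hU1back : ∀ x ∈ U1, spliceMap v u (spliceMap u v x) = x := by
      intro x hx
      rcases Finset.mem_insert.mp hx with h | h
      · rw [h, hsuu, hsvv]
      · rw [hsplice_uv x (fun e => hu1 (e ▸ h)), hsplice_vu x (fun e => hv1 (e ▸ h))]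
    have htmem : ∀ x ∈ U1, ∀ y ∈ t x, (x, y) ∈ A1 := by
      intro x hx y hy
      rw [htpos x hx] at hy
      obtain ⟨a, ha, hay⟩ := Finset.mem_image.mp hy
      obtain ⟨haA, hat⟩ := Finset.mem_filter.mp ha
      have htail : a.1 ∈ V1 ∨ a.1 = v := hat ▸ hU1tail x hx
      have hhead : a.2 ∈ V1 ∨ a.2 = u := (hsep a haA).mp htail
      have ha2v : a.2 ≠ v := by
        rcases hhead with h | h
        · exact fun e => hv1 (e ▸ h)
        · exact fun e => huv (h.symm.trans e)
      have h1 := hA1_intro a haA htail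
      rw [hat, hU1back x hx] at h1
      rw [← hay, hsplice_vu _ ha2v]
      exact h1
    have hsubU : ∀ x ∈ U1, t x ⊆ U1 := by
      intro x hx y hy
      rcases (hA1_elim x y (htmem x hx y hy)).2 with h | h
      · exact Finset.mem_insert_of_mem h
      · exact h ▸ Finset.mem_insert_self _ _
    have hall : ∀ s : Finset V, s.card ≤ (s.biUnion t).card := by
      intro s
      set s1 := s.filter (· ∈ U1) with hs1def
      set s0 := s.filter (fun x => ¬ x ∈ U1) with hs0def
      have hscard : s1.card + s0.card = s.card :=
        Finset.card_filter_add_card_filter_not _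
      set T := s1.image (spliceMap u v) with hTdef
      have hs1U1 : ∀ x ∈ s1, x ∈ U1 := fun x hx => (Finset.mem_filter.mp hx).2
      have hTsub : ∀ w ∈ T, w ∈ V1 ∨ w = v := by
        intro w hw
        obtain ⟨x, hx, rfl⟩ := Finset.mem_image.mp hw
        exact hU1tail x (hs1U1 x hx)
      have hTcard : T.card = s1.card := by
        apply Finset.card_image_of_injOn
        intro x hx y hy hxy
        have h1 := hU1back x (hs1U1 x (Finset.mem_coe.mp hx))
        have h2 := hU1back y (hs1U1 y (Finset.mem_coe.mp hy))
        rw [← h1, ← h2, hxy]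
      set F := A.filter (fun a => a.1 ∈ T) with hFdef
      have hFcard : F.card = 2 * s1.card := by
        have hFeq : F = T.biUnion (fun w => A.filter (fun a => a.1 = w)) := by
          ext a
          simp only [hFdef, Finset.mem_filter, Finset.mem_biUnion]
          constructor
          · rintro ⟨ha, hw⟩; exact ⟨a.1, hw, ha, rfl⟩
          · rintro ⟨w, hw, ha, hE⟩; exact ⟨ha, hE ▸ hw⟩
        have hdeg : ∀ w ∈ T, (A.filter (fun a => a.1 = w)).card = 2 := fun w _ => (hreg w).2
        have hdisjF : ∀ x ∈ T, ∀ y ∈ T, x ≠ y →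
            Disjoint (A.filter (fun a => a.1 = x)) (A.filter (fun a => a.1 = y)) := by
          intro x _ y _ hxy
          rw [Finset.disjoint_left]
          intro a ha ha2
          exact hxy ((Finset.mem_filter.mp ha).2.symm.trans (Finset.mem_filter.mp ha2).2)
        rw [hFeq, Finset.card_biUnion hdisjF, Finset.sum_congr rfl hdeg,
          Finset.sum_const, smul_eq_mul, mul_comm, hTcard]
      have hFle : F.card ≤ 2 * (s1.biUnion t).card := by
        have hsub : F ⊆ (s1.biUnion t).biUnion (fun y => A.filter (fun a => a.2 = y)) := by
          intro a ha
          obtain ⟨haA, haT⟩ := Finset.mem_filter.mp ha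
          obtain ⟨x, hx, hxa⟩ := Finset.mem_image.mp haT
          have hxU1 : x ∈ U1 := hs1U1 x hx
          have htail : a.1 ∈ V1 ∨ a.1 = v := hTsub a.1 haT
          have hhead : a.2 ∈ V1 ∨ a.2 = u := (hsep a haA).mp htail
          have ha2v : a.2 ≠ v := by
            rcases hhead with h | h
            · exact fun e => hv1 (e ▸ h)
            · exact fun e => huv (h.symm.trans e)
          have ha2t : a.2 ∈ t x := by
            rw [htpos x hxU1]
            exact Finset.mem_image.mpr ⟨a, Finset.mem_filter.mpr ⟨haA, hxa.symm⟩,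
              hsplice_vu _ ha2v⟩
          exact Finset.mem_biUnion.mpr ⟨a.2, Finset.mem_biUnion.mpr ⟨x, hx, ha2t⟩,
            Finset.mem_filter.mpr ⟨haA, rfl⟩⟩
        calc F.card ≤ ∑ y ∈ s1.biUnion t, (A.filter (fun a => a.2 = y)).card :=
              le_trans (Finset.card_le_card hsub) Finset.card_biUnion_le
          _ = ∑ y ∈ s1.biUnion t, 2 := Finset.sum_congr rfl (fun y _ => (hreg y).1)
          _ = 2 * (s1.biUnion t).card := by rw [Finset.sum_const, smul_eq_mul, mul_comm]
      have hs1le : s1.card ≤ (s1.biUnion t).card := by omega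
      have hs0eq : s0.biUnion t = s0 := by
        ext x
        constructor
        · intro hx
          obtain ⟨y, hy, hxy⟩ := Finset.mem_biUnion.mp hx
          rw [htneg y (Finset.mem_filter.mp hy).2] at hxy
          rw [Finset.mem_singleton.mp hxy]
          exact hy
        · intro hx
          exact Finset.mem_biUnion.mpr ⟨x, hx,
            by rw [htneg x (Finset.mem_filter.mp hx).2]; exact Finset.mem_singleton_self x⟩
      have hdisj2 : Disjoint (s1.biUnion t) s0 := by
        rw [Finset.disjoint_right]
        intro x hx hx1
        obtain ⟨y, hy, hxy⟩ := Finset.mem_biUnion.mp hx1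
        exact (Finset.mem_filter.mp hx).2 (hsubU y (hs1U1 y hy) hxy)
      have hsub1 : s1.biUnion t ∪ s0 ⊆ s.biUnion t := by
        apply Finset.union_subset
        · exact Finset.biUnion_subset_biUnion_of_subset_left t (Finset.filter_subset _ _)
        · rw [← hs0eq]
          exact Finset.biUnion_subset_biUnion_of_subset_left t (Finset.filter_subset _ _)
      have := Finset.card_le_card hsub1
      rw [Finset.card_union_of_disjoint hdisj2] at this
      omega
    obtain ⟨fH, hfinjH, hfH⟩ := (Finset.all_card_le_biUnion_card_iff_exists_injective t).mp hall
    refine ⟨Equiv.ofBijective fH (Finite.injective_iff_bijective.mp hfinjH), ?_, ?_⟩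
    · intro x hx
      exact htmem x hx (fH x) (hfH x)
    · intro x hx
      have := hfH x
      rw [htneg x hx] at this
      exact Finset.mem_singleton.mp this
  obtain ⟨σ1, hσ1⟩ := hσ1ex
  -- the range facts for σ1 and for factors of A2
  have hσ1mem : ∀ x ∈ U1, σ1 x ∈ U1 := by
    intro x hx
    have := (hA1_elim x (σ1 x) (hσ1.1 x hx)).2
    rcases this with h | h
    · exact Finset.mem_insert_of_mem h
    · exact h ▸ Finset.mem_insert_self _ _
  -- cardinalities
  have hcardsum : U1.card + U2.card = Finset.univ.card (α := V) := by
    have h1 : U1.card = V1.card + 1 := Finset.card_insert_of_notMem hu1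
    have h2 : U2.card = V2.card + 1 := Finset.card_insert_of_notMem hv2
    have h3 : V1.card + V2.card = (V1 ∪ V2).card := (Finset.card_union_of_disjoint hdisj).symm
    have h4 : ({u, v} : Finset V).card = 2 := by
      rw [Finset.card_insert_of_notMem (by simpa using huv), Finset.card_singleton]
    have h5 : (V1 ∪ V2).card = (Finset.univ : Finset V).card - ({u, v} : Finset V).card := by
      rw [hpart]
      exact Finset.card_sdiff_of_subset (Finset.subset_univ _)
    have h6 : ({u, v} : Finset V).card ≤ (Finset.univ : Finset V).card := Finset.card_le_univ _
    omega
  -- Part 1: every factor of (A2, U2) is even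
  have heven2 : AllFactorsEven A2 U2 := by
    intro σ2 hσ2
    have hσ2mem : ∀ x ∈ U2, σ2 x ∈ U2 := by
      intro x hx
      have := (hA2_elim x (σ2 x) (hσ2.1 x hx)).2
      rcases this with h | h
      · exact Finset.mem_insert_of_mem h
      · exact h ▸ Finset.mem_insert_self _ _
    set σ : Equiv.Perm V := σ1 * σ2 * Equiv.swap u v with hσdef
    have hnotU2 : ∀ x ∈ U1, x ∉ U2 := by
      intro x hx hx2
      rcases Finset.mem_insert.mp hx with h | h <;> rcases Finset.mem_insert.mp hx2 with h2 | h2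
      · exact huv (h.symm.trans h2)
      · exact hu2 (h ▸ h2)
      · exact hv1 (h2 ▸ h)
      · exact h12 x h h2
    have hnotU1 : ∀ x ∈ U2, x ∉ U1 := fun x hx hx2 => hnotU2 x hx2 hx
    have hfac : IsFactorPerm A Finset.univ σ := by
      refine ⟨fun x _ => ?_, fun x hx => absurd (Finset.mem_univ x) hx⟩
      have happ : σ x = σ1 (σ2 (Equiv.swap u v x)) := rfl
      rcases hcases x with hx | hx | hx | hx
      · have hxu : x ≠ u := fun e => hu1 (e ▸ hx)
        have hxv : x ≠ v := fun e => hv1 (e ▸ hx)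
        rw [happ, Equiv.swap_apply_of_ne_of_ne hxu hxv,
          hσ2.2 x (hnotU2 x (Finset.mem_insert_of_mem hx))]
        have h1 := hA1_elim x (σ1 x) (hσ1.1 x (Finset.mem_insert_of_mem hx))
        rcases h1.1 with ⟨_, h⟩ | ⟨h, _⟩
        · exact h
        · exact absurd (h ▸ hx) hu1
      · have hxu : x ≠ u := fun e => hu2 (e ▸ hx)
        have hxv : x ≠ v := fun e => hv2 (e ▸ hx)
        rw [happ, Equiv.swap_apply_of_ne_of_ne hxu hxv]
        have h1 := hA2_elim x (σ2 x) (hσ2.1 x (Finset.mem_insert_of_mem hx))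
        have hmem : σ2 x ∈ U2 := hσ2mem x (Finset.mem_insert_of_mem hx)
        rw [hσ1.2 _ (hnotU1 _ hmem)]
        rcases h1.1 with ⟨_, h⟩ | ⟨h, _⟩
        · exact h
        · exact absurd (h ▸ hx) hv2
      · subst hx
        rw [happ, Equiv.swap_apply_left]
        have h1 := hA2_elim v (σ2 v) (hσ2.1 v (Finset.mem_insert_self _ _))
        have hmem : σ2 v ∈ U2 := hσ2mem v (Finset.mem_insert_self _ _)
        rw [hσ1.2 _ (hnotU1 _ hmem)]
        rcases h1.1 with ⟨h, _⟩ | ⟨_, h⟩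
        · exact absurd h hv2
        · exact h
      · subst hx
        rw [happ, Equiv.swap_apply_right]
        rw [hσ2.2 u (hnotU2 u (Finset.mem_insert_self _ _))]
        have h1 := hA1_elim u (σ1 u) (hσ1.1 u (Finset.mem_insert_self _ _))
        rcases h1.1 with ⟨h, _⟩ | ⟨_, h⟩
        · exact absurd h hu1
        · exact h
    have hc : Odd (cycleCountOn Finset.univ σ) := hodd σ hfac
    have hc1 : Even (cycleCountOn U1 σ1) := heven1 σ1 hσ1
    have hs : Equiv.Perm.sign σ = (-1 : ℤˣ) ^ (Finset.univ.card (α := V) + cycleCountOn Finset.univ σ) :=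
      sign_eq_cycleCountOn _ _ (fun x hx => absurd (Finset.mem_univ x) hx)
    have hs1 : Equiv.Perm.sign σ1 = (-1 : ℤˣ) ^ (U1.card + cycleCountOn U1 σ1) :=
      sign_eq_cycleCountOn _ _ hσ1.2
    have hs2 : Equiv.Perm.sign σ2 = (-1 : ℤˣ) ^ (U2.card + cycleCountOn U2 σ2) :=
      sign_eq_cycleCountOn _ _ hσ2.2
    have hmul : Equiv.Perm.sign σ =
        Equiv.Perm.sign σ1 * Equiv.Perm.sign σ2 * Equiv.Perm.sign (Equiv.swap u v) := by
      rw [hσdef, map_mul, map_mul]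
    rw [Equiv.Perm.sign_swap huv, hs, hs1, hs2] at hmul
    have hmul2 : ((-1 : ℤˣ) ^ (Finset.univ.card (α := V) + cycleCountOn Finset.univ σ)) =
        (-1 : ℤˣ) ^ ((U1.card + cycleCountOn U1 σ1) + (U2.card + cycleCountOn U2 σ2) + 1) := by
      rw [hmul]
      conv_rhs => rw [pow_add, pow_add, pow_one]
    have hpar := (units_neg_one_pow_eq_iff _ _).mp hmul2
    rw [Nat.odd_iff] at hc
    rw [Nat.even_iff] at hc1 ⊢
    omega
  refine ⟨heven2, ?_⟩
  -- Part 2: non-Hamiltonicity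
  rintro ⟨n, f, hn, hfinj, hfsurj, harc⟩
  obtain ⟨m, rfl⟩ : ∃ m, n = m + 1 := ⟨n - 1, by omega⟩
  have hfsurj' : Function.Surjective f := fun x => (hfsurj x).mp (Finset.mem_univ x)
  set e : Fin (m + 1) ≃ V := Equiv.ofBijective f ⟨hfinj, hfsurj'⟩ with hedef
  have heapp : ∀ i, e i = f i := fun i => rfl
  set σ : Equiv.Perm V := (e.symm.trans (finRotate (m + 1))).trans e with hσdef
  have hrot : ∀ i : Fin (m + 1), finRotate (m + 1) i = cyclicSucc i := by
    intro i
    apply Fin.ext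
    rw [finRotate_succ_apply, Fin.val_add]
    show (i.1 + (1 % (m + 1))) % (m + 1) = (i.1 + 1) % (m + 1)
    conv_rhs => rw [Nat.add_mod, Nat.mod_eq_of_lt i.isLt]
  have hσapp : ∀ i, σ (f i) = f (cyclicSucc i) := by
    intro i
    have h1 : e.symm (f i) = i := e.symm_apply_apply i
    show e (finRotate (m + 1) (e.symm (f i))) = f (cyclicSucc i)
    rw [h1, hrot i, heapp]
  have hfactor : ∀ x : V, (x, σ x) ∈ A := by
    intro x
    obtain ⟨i, rfl⟩ := hfsurj' x
    rw [hσapp i]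
    exact harc i
  -- transitivity of σ starting from u
  have hiterf : ∀ (k : ℕ) (i : Fin (m + 1)),
      σ^[k] (f i) = f ⟨(i.1 + k) % (m + 1), Nat.mod_lt _ (Nat.succ_pos m)⟩ := by
    intro k
    induction k with
    | zero =>
      intro i
      simp [Nat.mod_eq_of_lt i.isLt]
    | succ k ih =>
      intro i
      rw [Function.iterate_succ_apply, hσapp i, ih (cyclicSucc i)]
      congr 1
      apply Fin.ext
      show ((i.1 + 1) % (m + 1) + k) % (m + 1) = (i.1 + (k + 1)) % (m + 1)
      rw [Nat.mod_add_mod]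
      congr 1
      omega
  have htrans : ∀ x : V, ∃ k, σ^[k] u = x := by
    intro x
    obtain ⟨i, rfl⟩ := hfsurj' x
    obtain ⟨j, hj⟩ := hfsurj' u
    refine ⟨(m + 1) + i.1 - j.1, ?_⟩
    rw [← hj, hiterf]
    congr 1
    apply Fin.ext
    show (j.1 + ((m + 1) + i.1 - j.1)) % (m + 1) = i.1
    have hjlt : j.1 < m + 1 := j.isLt
    have : j.1 + ((m + 1) + i.1 - j.1) = (m + 1) + i.1 := by omega
    rw [this, Nat.add_mod_left, Nat.mod_eq_of_lt i.isLt]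
  -- build σ2, the restriction of σ to the second side
  have harcU2 : ∀ x, ¬ (x ∈ V1 ∨ x = v) → ¬ (σ x ∈ V1 ∨ σ x = u) :=
    fun x h h2 => h ((hsep (x, σ x) (hfactor x)).mpr h2)
  have hmemU2 : ∀ y, ¬ (y ∈ V1 ∨ y = u) → y ∈ U2 := by
    intro y hy
    push_neg at hy
    rcases hcases y with h | h | h | h
    · exact absurd h hy.1
    · exact Finset.mem_insert_of_mem h
    · exact absurd h hy.2
    · exact h ▸ Finset.mem_insert_self _ _
  set g : V → V := fun x => if x = v then σ u else if x ∈ V2 then σ x else x with hgdef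
  have hgU2 : ∀ x ∈ U2, g x ∈ U2 := by
    intro x hx
    rcases Finset.mem_insert.mp hx with h | h
    · subst h
      simp only [hgdef, if_pos rfl]
      exact hmemU2 _ (harcU2 u (by push_neg; exact ⟨hu1, huv⟩))
    · have hxv : x ≠ v := fun e => hv2 (e ▸ h)
      simp only [hgdef, if_neg hxv, if_pos h]
      exact hmemU2 _ (harcU2 x (by push_neg; exact ⟨fun h1 => h12 x h1 h, hxv⟩))
  have hginj : Set.InjOn g ↑U2 := by
    intro x hx y hy hxy
    replace hx : x = v ∨ x ∈ V2 := Finset.mem_insert.mp (Finset.mem_coe.mp hx)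
    replace hy : y = v ∨ y ∈ V2 := Finset.mem_insert.mp (Finset.mem_coe.mp hy)
    have hgx : ∀ z, z = v ∨ z ∈ V2 → g z = σ (spliceMap v u z) := by
      intro z hz
      rcases hz with h | h
      · subst h; simp [hgdef, spliceMap]
      · have hzv : z ≠ v := fun e => hv2 (e ▸ h)
        simp [hgdef, hzv, h, hsplice_vu _ hzv]
    rw [hgx x hx, hgx y hy] at hxy
    have h2 := σ.injective hxy
    rcases hx with h | h <;> rcases hy with h' | h'
    · rw [h, h']
    · subst h; rw [hsvv, hsplice_vu _ (fun e => hv2 (e ▸ h'))] at h2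
      exact absurd (h2 ▸ h') hu2
    · subst h'; rw [hsvv, hsplice_vu _ (fun e => hv2 (e ▸ h))] at h2
      exact absurd (h2.symm ▸ h) hu2
    · rw [hsplice_vu _ (fun e => hv2 (e ▸ h)), hsplice_vu _ (fun e => hv2 (e ▸ h'))] at h2
      exact h2
  have hgfix : ∀ x ∉ U2, g x = x := by
    intro x hx
    have h1 : x ≠ v := fun e => hx (e ▸ Finset.mem_insert_self _ _)
    have h2 : x ∉ V2 := fun e => hx (Finset.mem_insert_of_mem e)
    simp [hgdef, h1, h2]
  set σ2 : Equiv.Perm V := Equiv.ofBijective g (mk_perm_inj U2 g hgU2 hginj hgfix) with hσ2def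
  have hσ2app : ∀ x, σ2 x = g x := fun x => rfl
  have hσ2fac : IsFactorPerm A2 U2 σ2 := by
    constructor
    · intro x hx
      rw [hσ2app]
      rcases Finset.mem_insert.mp hx with h | h
      · subst h
        simp only [hgdef, if_pos rfl]
        have h1 := hA2_intro (u, σ u) (hfactor u) (by push_neg; exact ⟨hu1, huv⟩)
        simpa [hsuu, hsplice_uv _ (fun e => (harcU2 u (by push_neg; exact ⟨hu1, huv⟩)) (Or.inr e))] using h1
      · have hxv : x ≠ v := fun e => hv2 (e ▸ h)
        simp only [hgdef, if_neg hxv, if_pos h]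
        have hns : ¬ (x ∈ V1 ∨ x = v) := by push_neg; exact ⟨fun h1 => h12 x h1 h, hxv⟩
        have h1 := hA2_intro (x, σ x) (hfactor x) hns
        simpa [hsplice_uv _ (fun e => hu2 (e ▸ h)),
          hsplice_uv _ (fun e => (harcU2 x hns) (Or.inr e))] using h1
    · intro x hx
      rw [hσ2app, hgfix x hx]
  have heven : Even (cycleCountOn U2 σ2) := heven2 σ2 hσ2fac
  have hone : cycleCountOn U2 σ2 = 1 := by
    apply cycleCountOn_eq_one U2 σ2 v (Finset.mem_insert_self _ _)
      (fun x hx => (hσ2app x).trans (hgfix x hx))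
    -- every vertex of U2 is in the σ2-orbit of v
    have hstep : ∀ k : ℕ, ∀ x, σ^[k + 1] u = x → x ∈ U2 → ∃ mm, σ2^[mm] v = x := by
      intro k
      induction k with
      | zero =>
        intro x hx _
        refine ⟨1, ?_⟩
        simp only [Function.iterate_one] at hx ⊢
        rw [hσ2app]
        simp only [hgdef, if_pos rfl]
        exact hx
      | succ k ih =>
        intro x hx hxU2
        set z := σ^[k + 1] u with hzdef
        have hxz : x = σ z := by rw [← hx, Function.iterate_succ_apply']
        have hxn : ¬ (x ∈ V1 ∨ x = u) := by
          push_neg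
          rcases Finset.mem_insert.mp hxU2 with h | h
          · exact ⟨fun h1 => (h ▸ hv1) h1, fun h1 => huv (h1 ▸ h)⟩
          · exact ⟨fun h1 => h12 x h1 h, fun h1 => hu2 (h1 ▸ h)⟩
        have hzn : ¬ (z ∈ V1 ∨ z = v) :=
          fun h => hxn (hxz ▸ (hsep (z, σ z) (hfactor z)).mp h)
        push_neg at hzn
        have hz2 : z ∈ V2 ∨ z = u := by
          rcases hcases z with h | h | h | h
          · exact absurd h hzn.1
          · tauto
          · tauto
          · exact absurd h hzn.2
        rcases hz2 with hz | hz
        · obtain ⟨mm, hmm⟩ := ih z rfl (Finset.mem_insert_of_mem hz)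
          refine ⟨mm + 1, ?_⟩
          rw [Function.iterate_succ_apply', hmm, hσ2app]
          have hzv : z ≠ v := fun e => hv2 (e ▸ hz)
          simp only [hgdef, if_neg hzv, if_pos hz]
          exact hxz.symm
        · refine ⟨1, ?_⟩
          simp only [Function.iterate_one]
          rw [hσ2app]
          simp only [hgdef, if_pos rfl]
          rw [hxz, hz]
    intro x hx
    obtain ⟨k, hk⟩ := htrans x
    match k, hk with
    | 0, hk =>
      exfalso
      simp only [Function.iterate_zero, id_eq] at hk
      rcases Finset.mem_insert.mp hx with h | h
      · exact huv (hk ▸ h)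
      · exact hu2 (hk ▸ h)
    | (k + 1), hk => exact hstep k x hk hx
  rw [hone, Nat.even_iff] at heven
  omega
end

section
/- Take two connected, even 2-diregular digraphs G_1 and G_2 (every factor of each has an even number of cycles), split one vertex in each, and splice the resulting entry/exit vertices crosswise so as to form a single connected 2-diregular digraph G. Then G is odd (every factor of G has an odd number of cycles) and G is non-Hamiltonian. This construction yields an infinite family of strongly connected non-Hamiltonian 2-diregular digraphs. -/
set_option linter.unusedSectionVars false

section AuxCC

open Equiv Finset

lemma neg_one_pow_cycleCountOn {W : Type*} [Fintype W] [DecidableEq W] (σ : Perm W) :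
    ((-1 : ℤˣ) ^ cycleCountOn Finset.univ σ) =
      Perm.sign σ * (-1) ^ (Fintype.card W) := by
  have h1 : (Finset.univ.filter fun x => σ x = x) = σ.supportᶜ := by
    ext x; simp [Equiv.Perm.mem_support]
  obtain ⟨d, hd⟩ : ∃ d, Fintype.card W = σ.support.card + d :=
    ⟨_, (Nat.add_sub_cancel' (Finset.card_le_univ _)).symm⟩
  rw [cycleCountOn, h1, Finset.card_compl, Equiv.Perm.sign_of_cycleType,
    Equiv.Perm.sum_cycleType, hd, Nat.add_sub_cancel_left]
  rw [pow_add, pow_add, pow_add]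
  have : ((-1 : ℤˣ)) ^ σ.support.card * (-1) ^ σ.support.card = 1 := by
    rw [← pow_add, ← two_mul, pow_mul]; norm_num
  rw [mul_mul_mul_comm, this, one_mul]

lemma sign_eq_cc {W : Type*} [Fintype W] [DecidableEq W] (σ : Perm W) :
    Perm.sign σ = (-1 : ℤˣ) ^ (cycleCountOn Finset.univ σ + Fintype.card W) := by
  have h := neg_one_pow_cycleCountOn σ
  rw [pow_add, h, mul_assoc, ← pow_add, ← two_mul, pow_mul]
  norm_num

lemma cycleCountOn_eq_one_s19 {W : Type*} [Fintype W] [DecidableEq W] [Nonempty W]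
    (σ : Perm W) (h : ∀ x y, σ.SameCycle x y) :
    cycleCountOn Finset.univ σ = 1 := by
  by_cases h1 : σ = 1
  · subst h1
    have hsub : ∀ x y : W, x = y := by
      intro x y
      obtain ⟨k, hk⟩ := h x y
      simpa using hk
    have hcard : Fintype.card W = 1 :=
      Fintype.card_eq_one_iff.2 ⟨Classical.arbitrary W, fun y => hsub y _⟩
    simp [cycleCountOn, Equiv.Perm.cycleType_one, Finset.filter_true_of_mem, hcard]
  · have hex : ∃ a, σ a ≠ a := by
      by_contra hc
      push_neg at hc
      exact h1 (Equiv.ext hc)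
    obtain ⟨a, ha⟩ := hex
    have hcyc : σ.IsCycle := ⟨a, ha, fun y _ => h a y⟩
    have hnofix : ∀ y, σ y ≠ y := by
      intro y hy
      obtain ⟨k, hk⟩ := h y a
      rw [Equiv.Perm.zpow_apply_eq_self_of_apply_eq_self hy k] at hk
      exact ha (hk ▸ hy)
    have hfilt : (Finset.univ.filter fun x => σ x = x) = ∅ :=
      Finset.filter_false_of_mem fun x _ => hnofix x
    rw [cycleCountOn, hcyc.cycleType, hfilt]
    simp

end AuxCC

section Splice

open Equiv Finset

variable {V1 V2 : Type*} [Fintype V1] [DecidableEq V1] [Fintype V2] [DecidableEq V2]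

def spl (A1 : Finset (V1 × V1)) (A2 : Finset (V2 × V2)) (u : V1) (w : V2) :
    Finset ((V1 ⊕ V2) × (V1 ⊕ V2)) :=
  (A1.image fun a =>
      ((if a.1 = u then Sum.inr w else Sum.inl a.1 : V1 ⊕ V2), Sum.inl a.2)) ∪
  (A2.image fun a =>
      ((if a.1 = w then Sum.inl u else Sum.inr a.1 : V1 ⊕ V2), Sum.inr a.2))

def emb1 (u : V1) (w : V2) (x : V1) : V1 ⊕ V2 :=
  if x = u then Sum.inr w else Sum.inl x

def emb2 (u : V1) (w : V2) (v : V2) : V1 ⊕ V2 :=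
  if v = w then Sum.inl u else Sum.inr v

variable {A1 : Finset (V1 × V1)} {A2 : Finset (V2 × V2)} {u : V1} {w : V2}

lemma emb1_injective : Function.Injective (emb1 u w) := by
  intro x y h
  unfold emb1 at h
  split_ifs at h with h1 h2 h2 <;> simp_all

lemma emb2_injective : Function.Injective (emb2 u w) := by
  intro x y h
  unfold emb2 at h
  split_ifs at h with h1 h2 h2 <;> simp_all

lemma emb1_ne_emb2 (x : V1) (v : V2) : emb1 u w x ≠ emb2 u w v := by
  unfold emb1 emb2
  split_ifs <;> simp_all
  exact fun h => ‹¬v = w› h.symm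

lemma stepA {x : V1} {t : V1 ⊕ V2} (h : (emb1 u w x, t) ∈ spl A1 A2 u w) :
    ∃ y, (x, y) ∈ A1 ∧ t = Sum.inl y := by
  rw [spl, Finset.mem_union] at h
  rcases h with h | h
  · obtain ⟨a, ha, heq⟩ := Finset.mem_image.1 h
    rw [Prod.ext_iff] at heq
    obtain ⟨h1, h2⟩ := heq
    have hax : a.1 = x := by
      unfold emb1 at h1
      split_ifs at h1 with h3 h4 h4 <;> simp_all
    refine ⟨a.2, ?_, h2.symm⟩
    rw [← hax]
    exact ha
  · exfalso
    obtain ⟨a, -, heq⟩ := Finset.mem_image.1 h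
    clear h
    have h1 := congrArg Prod.fst heq
    simp only [emb1] at h1
    split_ifs at h1 <;> simp_all [emb1, emb2]

lemma stepB {v : V2} {t : V1 ⊕ V2} (h : (emb2 u w v, t) ∈ spl A1 A2 u w) :
    ∃ y, (v, y) ∈ A2 ∧ t = Sum.inr y := by
  rw [spl, Finset.mem_union] at h
  rcases h with h | h
  · exfalso
    obtain ⟨a, -, heq⟩ := Finset.mem_image.1 h
    clear h
    have h1 := congrArg Prod.fst heq
    simp only [emb2] at h1
    split_ifs at h1 <;> simp_all [emb1, emb2]
  · obtain ⟨a, ha, heq⟩ := Finset.mem_image.1 h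
    rw [Prod.ext_iff] at heq
    obtain ⟨h1, h2⟩ := heq
    have hax : a.1 = v := by
      unfold emb2 at h1
      split_ifs at h1 with h3 h4 h4 <;> simp_all
    refine ⟨a.2, ?_, h2.symm⟩
    rw [← hax]
    exact ha

lemma exists_restrict (σ : Perm (V1 ⊕ V2))
    (hσ : ∀ z, (z, σ z) ∈ spl A1 A2 u w) :
    ∃ (σ1 : Perm V1) (σ2 : Perm V2),
      (∀ x, (x, σ1 x) ∈ A1) ∧ (∀ v, (v, σ2 v) ∈ A2) ∧
      (∀ x, σ (emb1 u w x) = Sum.inl (σ1 x)) ∧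
      (∀ v, σ (emb2 u w v) = Sum.inr (σ2 v)) := by
  have h1 : ∀ x : V1, ∃ y, (x, y) ∈ A1 ∧ σ (emb1 u w x) = Sum.inl y :=
    fun x => stepA (hσ (emb1 u w x))
  have h2 : ∀ v : V2, ∃ y, (v, y) ∈ A2 ∧ σ (emb2 u w v) = Sum.inr y :=
    fun v => stepB (hσ (emb2 u w v))
  choose g1 hg1 hg1' using h1
  choose g2 hg2 hg2' using h2
  have hinj1 : Function.Injective g1 := by
    intro x y h
    apply emb1_injective (u := u) (w := w)
    apply σ.injective
    rw [hg1', hg1', h]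
  have hinj2 : Function.Injective g2 := by
    intro x y h
    apply emb2_injective (u := u) (w := w)
    apply σ.injective
    rw [hg2', hg2', h]
  refine ⟨Equiv.ofBijective g1 (Finite.injective_iff_bijective.1 hinj1),
    Equiv.ofBijective g2 (Finite.injective_iff_bijective.1 hinj2),
    hg1, hg2, hg1', hg2'⟩

lemma decomp (σ : Perm (V1 ⊕ V2)) (σ1 : Perm V1) (σ2 : Perm V2)
    (e1 : ∀ x, σ (emb1 u w x) = Sum.inl (σ1 x))
    (e2 : ∀ v, σ (emb2 u w v) = Sum.inr (σ2 v)) :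
    σ = (σ1.sumCongr σ2) * Equiv.swap (Sum.inl u) (Sum.inr w) := by
  apply Equiv.ext
  intro z
  rcases z with x | v
  · by_cases hx : x = u
    · have hh : σ (Sum.inl u) = Sum.inr (σ2 w) := by
        rw [show (Sum.inl u : V1 ⊕ V2) = emb2 u w w from (if_pos rfl).symm]
        exact e2 w
      rw [hx, Perm.mul_apply, Equiv.swap_apply_left, hh]
      rfl
    · have hh : σ (Sum.inl x) = Sum.inl (σ1 x) := by
        rw [show (Sum.inl x : V1 ⊕ V2) = emb1 u w x from (if_neg hx).symm]
        exact e1 x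
      rw [Perm.mul_apply, Equiv.swap_apply_of_ne_of_ne (by simpa using hx) (by simp), hh]
      rfl
  · by_cases hv : v = w
    · have hh : σ (Sum.inr w) = Sum.inl (σ1 u) := by
        rw [show (Sum.inr w : V1 ⊕ V2) = emb1 u w u from (if_pos rfl).symm]
        exact e1 u
      rw [hv, Perm.mul_apply, Equiv.swap_apply_right, hh]
      rfl
    · have hh : σ (Sum.inr v) = Sum.inr (σ2 v) := by
        rw [show (Sum.inr v : V1 ⊕ V2) = emb2 u w v from (if_neg hv).symm]
        exact e2 v
      rw [Perm.mul_apply, Equiv.swap_apply_of_ne_of_ne (by simp) (by simpa using hv), hh]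
      rfl

/-- Transfer of the same-cycle relation from the spliced digraph to the first part. -/
lemma transfer (σ : Perm (V1 ⊕ V2)) (σ1 : Perm V1) (σ2 : Perm V2)
    (e1 : ∀ x, σ (emb1 u w x) = Sum.inl (σ1 x))
    (e2 : ∀ v, σ (emb2 u w v) = Sum.inr (σ2 v)) :
    ∀ (m : ℕ) (y : V1),
      (∀ x, (σ ^ m) (emb1 u w x) = emb1 u w y → σ1.SameCycle x y) ∧
      (∀ v, (σ ^ m) (emb2 u w v) = emb1 u w y → σ1.SameCycle u y) := by
  intro m
  induction m with
  | zero =>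
    intro y
    constructor
    · intro x h
      simp only [pow_zero, Perm.one_apply] at h
      exact (emb1_injective h) ▸ Equiv.Perm.SameCycle.refl σ1 x
    · intro v h
      simp only [pow_zero, Perm.one_apply] at h
      exact absurd h.symm (emb1_ne_emb2 y v)
  | succ m ih =>
    intro y
    constructor
    · intro x h
      rw [pow_succ, Perm.mul_apply, e1 x] at h
      by_cases hxu : σ1 x = u
      · rw [hxu, show (Sum.inl u : V1 ⊕ V2) = emb2 u w w from (if_pos rfl).symm] at h
        have hx : σ1.SameCycle x u := ⟨1, by simpa using hxu⟩
        exact Equiv.Perm.SameCycle.trans hx ((ih y).2 w h)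
      · rw [show (Sum.inl (σ1 x) : V1 ⊕ V2) = emb1 u w (σ1 x) from (if_neg hxu).symm] at h
        exact Equiv.Perm.SameCycle.trans ⟨1, by simp⟩ ((ih y).1 _ h)
    · intro v h
      rw [pow_succ, Perm.mul_apply, e2 v] at h
      by_cases hvw : σ2 v = w
      · rw [hvw, show (Sum.inr w : V1 ⊕ V2) = emb1 u w u from (if_pos rfl).symm] at h
        exact (ih y).1 u h
      · rw [show (Sum.inr (σ2 v) : V1 ⊕ V2) = emb2 u w (σ2 v) from (if_neg hvw).symm] at h
        exact (ih y).2 _ h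

end Splice


theorem crosswise_splice_odd_nonham {V1 V2 : Type*}
    [Fintype V1] [DecidableEq V1] [Fintype V2] [DecidableEq V2]
    (A1 : Finset (V1 × V1)) (A2 : Finset (V2 × V2))
    (hreg1 : ∀ x : V1, inDeg A1 x = 2 ∧ outDeg A1 x = 2)
    (hreg2 : ∀ x : V2, inDeg A2 x = 2 ∧ outDeg A2 x = 2)
    (hconn1 : ∀ x y : V1,
      Relation.ReflTransGen (fun a b => (a, b) ∈ A1 ∨ (b, a) ∈ A1) x y)
    (hconn2 : ∀ x y : V2,
      Relation.ReflTransGen (fun a b => (a, b) ∈ A2 ∨ (b, a) ∈ A2) x y)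
    (heven1 : AllFactorsEven A1 Finset.univ)
    (heven2 : AllFactorsEven A2 Finset.univ)
    (u : V1) (w : V2) :
    AllFactorsOdd
      ((A1.image fun a =>
          ((if a.1 = u then Sum.inr w else Sum.inl a.1 : V1 ⊕ V2), Sum.inl a.2)) ∪
       (A2.image fun a =>
          ((if a.1 = w then Sum.inl u else Sum.inr a.1 : V1 ⊕ V2), Sum.inr a.2)))
      Finset.univ ∧
    ¬ IsHamCycle Finset.univ
      ((A1.image fun a =>
          ((if a.1 = u then Sum.inr w else Sum.inl a.1 : V1 ⊕ V2), Sum.inl a.2)) ∪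
       (A2.image fun a =>
          ((if a.1 = w then Sum.inl u else Sum.inr a.1 : V1 ⊕ V2), Sum.inr a.2))) := by
  
  classical
  constructor
  · -- every factor of the spliced digraph has an odd number of cycles
    intro σ hfac
    have hσ : ∀ z, (z, σ z) ∈ spl A1 A2 u w := fun z => hfac.1 z (Finset.mem_univ z)
    obtain ⟨σ1, σ2, harc1, harc2, e1, e2⟩ := exists_restrict σ hσ
    have hc1 : Even (cycleCountOn Finset.univ σ1) :=
      heven1 σ1 ⟨fun x _ => harc1 x, fun x hx => absurd (Finset.mem_univ x) hx⟩
    have hc2 : Even (cycleCountOn Finset.univ σ2) :=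
      heven2 σ2 ⟨fun v _ => harc2 v, fun v hv => absurd (Finset.mem_univ v) hv⟩
    have hs1 : Equiv.Perm.sign σ1 = (-1 : ℤˣ) ^ (Fintype.card V1) := by
      rw [sign_eq_cc, pow_add, hc1.neg_one_pow, one_mul]
    have hs2 : Equiv.Perm.sign σ2 = (-1 : ℤˣ) ^ (Fintype.card V2) := by
      rw [sign_eq_cc, pow_add, hc2.neg_one_pow, one_mul]
    have hpow : (-1 : ℤˣ) ^ cycleCountOn Finset.univ σ = -1 := by
      rw [neg_one_pow_cycleCountOn, decomp σ σ1 σ2 e1 e2, map_mul,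
        Equiv.Perm.sign_sumCongr, Equiv.Perm.sign_swap (by simp), hs1, hs2,
        Fintype.card_sum, pow_add]
      generalize (-1 : ℤˣ) ^ Fintype.card V1 = a
      generalize (-1 : ℤˣ) ^ Fintype.card V2 = b
      rw [mul_comm (a * b * -1) (a * b), ← mul_assoc, Int.units_mul_self, one_mul]
    rcases Nat.even_or_odd (cycleCountOn Finset.univ σ) with he | ho
    · rw [he.neg_one_pow] at hpow
      exact absurd hpow (by decide)
    · exact ho
  · -- non-Hamiltonicity
    rintro ⟨n, f, hn, hinj, hcover, hadj⟩
    haveI : NeZero n := ⟨hn.ne'⟩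
    have hbij : Function.Bijective f := ⟨hinj, fun z => (hcover z).1 (Finset.mem_univ z)⟩
    set e : Fin n ≃ (V1 ⊕ V2) := Equiv.ofBijective f hbij with he
    set σ : Equiv.Perm (V1 ⊕ V2) := (e.symm.trans (Equiv.addRight (1 : Fin n))).trans e
      with hσdef
    have hcs : ∀ i : Fin n, cyclicSucc i = i + 1 := by
      intro i
      apply Fin.ext
      rw [Fin.add_def, Fin.val_one']
      exact ((Nat.mod_modEq 1 n).add_left i.1).symm
    have hσf : ∀ i, σ (f i) = f (cyclicSucc i) := by
      intro i
      have h1 : e.symm (f i) = i := e.symm_apply_apply i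
      show e (Equiv.addRight (1 : Fin n) (e.symm (f i))) = _
      rw [h1, hcs]
      rfl
    have hσarc : ∀ z, (z, σ z) ∈ spl A1 A2 u w := by
      intro z
      obtain ⟨i, rfl⟩ := (hcover z).1 (Finset.mem_univ z)
      rw [hσf i]
      exact hadj i
    have hpowf : ∀ (k : ℕ) (i : Fin n),
        (σ ^ k) (f i) = f ⟨(i.1 + k) % n, Nat.mod_lt _ hn⟩ := by
      intro k
      induction k with
      | zero =>
        intro i
        simp only [pow_zero, Equiv.Perm.one_apply]
        congr 1
        exact Fin.ext (Nat.mod_eq_of_lt i.isLt).symm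
      | succ k ih =>
        intro i
        rw [pow_succ', Equiv.Perm.mul_apply, ih i, hσf]
        congr 1
        apply Fin.ext
        show (((i.1 + k) % n) + 1) % n = (i.1 + (k + 1)) % n
        have h2 : ((i.1 + k) % n + 1) % n = (i.1 + k + 1) % n :=
          (Nat.mod_modEq (i.1 + k) n).add_right 1
        rw [h2, Nat.add_assoc]
    have hreach : ∀ z z' : V1 ⊕ V2, ∃ k : ℕ, (σ ^ k) z = z' := by
      intro z z'
      obtain ⟨i, rfl⟩ := (hcover z).1 (Finset.mem_univ z)
      obtain ⟨j, rfl⟩ := (hcover z').1 (Finset.mem_univ z')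
      refine ⟨n + j.1 - i.1, ?_⟩
      rw [hpowf]
      congr 1
      apply Fin.ext
      show (i.1 + (n + j.1 - i.1)) % n = j.1
      have hi := i.isLt
      have h1 : i.1 + (n + j.1 - i.1) = n + j.1 := by omega
      rw [h1, Nat.add_mod_left, Nat.mod_eq_of_lt j.isLt]
    obtain ⟨σ1, σ2, harc1, harc2, e1, e2⟩ := exists_restrict σ hσarc
    have hall : ∀ x y : V1, σ1.SameCycle x y := by
      intro x y
      obtain ⟨k, hk⟩ := hreach (emb1 u w x) (emb1 u w y)
      exact (transfer σ σ1 σ2 e1 e2 k y).1 x hk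
    haveI : Nonempty V1 := ⟨u⟩
    have h1 : cycleCountOn Finset.univ σ1 = 1 := cycleCountOn_eq_one_s19 σ1 hall
    have h2 : Even (cycleCountOn Finset.univ σ1) :=
      heven1 σ1 ⟨fun x _ => harc1 x, fun x hx => absurd (Finset.mem_univ x) hx⟩
    rw [h1] at h2
    exact (Nat.not_even_one) h2
end
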